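/- arXiv:1707.05502 — 10 statements merged into one kernel-verified Lean document; each statement's English description precedes it below -/
import Mathlib

section
/- Let G be the incidence matrix of a directed graph Γ on q vertices (each column of G equals e_i - e_j for some edge (v_i, v_j)). Then Γ has a directed path from vertex k to vertex ℓ and a directed path from vertex ℓ to vertex k if and only if the convex cone positively spanned by the columns of G contains the line spanned by e_k - e_ℓ. -/
/-!
A directed path from `a` to `b` telescopes: the sum of the columns of its edges is `e_a - e_b`.
Conversely, let `G α = e_a - e_b` with `α ≥ 0`, and let `w` be the indicator of the set of
vertices reachable from `a` along edges in the support of `α`. No such edge leaves that set, so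
`w ⬝ G α = ∑ σ, α σ (w (src σ) - w (tgt σ)) ≤ 0`, whereas `w ⬝ (e_a - e_b) = 1 - w b`; hence `b` is
reachable. Finally a cone contains the line through `v` iff it contains both `v` and `-v`.
-/

open Matrix PointedCone Relation

lemma PointedCone.ofSubmodule_span_singleton_le_iff {E : Type*} [AddCommGroup E] [Module ℝ E]
    (C : PointedCone ℝ E) (v : E) :
    ofSubmodule (Submodule.span ℝ {v}) ≤ C ↔ v ∈ C ∧ -v ∈ C := by
  rw [gc_ofSubmodule_lineal, Submodule.span_singleton_le_iff_mem, mem_lineal]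

namespace Matrix

variable {V E : Type*}

lemma mem_hull_range_col_iff [Fintype E] (G : Matrix V E ℝ) (y : V → ℝ) :
    y ∈ hull ℝ (Set.range G.col) ↔ ∃ α : E → ℝ, (∀ σ, 0 ≤ α σ) ∧ G *ᵥ α = y := by
  rw [Submodule.mem_span_range_iff_exists_fun]
  constructor
  · rintro ⟨c, rfl⟩
    refine ⟨fun σ => c σ, fun σ => (c σ).2, ?_⟩
    ext i
    simp [mulVec, dotProduct, mul_comm, Finset.sum_apply, ← Nonneg.coe_smul]
  · rintro ⟨α, hα, rfl⟩
    refine ⟨fun σ => ⟨α σ, hα σ⟩, ?_⟩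
    ext i
    simp [mulVec, dotProduct, mul_comm, Finset.sum_apply, ← Nonneg.coe_smul]

variable [DecidableEq V]

def incidenceMatrix (g : E → V × V) : Matrix V E ℝ :=
  of fun i σ => (Pi.single (g σ).1 1 - Pi.single (g σ).2 1 : V → ℝ) i

variable (g : E → V × V)

lemma col_incidenceMatrix (σ : E) :
    (incidenceMatrix g).col σ = Pi.single (g σ).1 1 - Pi.single (g σ).2 1 := rfl

lemma vecMul_incidenceMatrix [Fintype V] (w : V → ℝ) (σ : E) :
    (w ᵥ* incidenceMatrix g) σ = w (g σ).1 - w (g σ).2 := by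
  change w ⬝ᵥ (incidenceMatrix g).col σ = _
  simp [col_incidenceMatrix, dotProduct_sub]

lemma single_sub_single_mem_hull_of_reflTransGen {a b : V}
    (h : ReflTransGen (fun x y => ∃ σ, g σ = (x, y)) a b) :
    Pi.single a 1 - Pi.single b 1 ∈ hull ℝ (Set.range (incidenceMatrix g).col) := by
  induction h with
  | refl => simp
  | @tail b c _ hbc ih =>
    obtain ⟨σ, hσ⟩ := hbc
    have hcol := subset_hull (R := ℝ) (Set.mem_range_self (f := (incidenceMatrix g).col) σ)
    rw [col_incidenceMatrix, hσ] at hcol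
    simpa using add_mem ih hcol

variable [Fintype E]

lemma le_of_incidenceMatrix_mulVec_eq [Fintype V] {α : E → ℝ} (hα : ∀ σ, 0 ≤ α σ) {a b : V}
    (hflow : incidenceMatrix g *ᵥ α = Pi.single a 1 - Pi.single b 1) (w : V → ℝ)
    (hw : ∀ σ, 0 < α σ → w (g σ).1 ≤ w (g σ).2) : w a ≤ w b := by
  have hdot : w a - w b = ∑ σ, (w (g σ).1 - w (g σ).2) * α σ :=
    calc w a - w b = w ⬝ᵥ (Pi.single a 1 - Pi.single b 1) := by simp [dotProduct_sub]
      _ = (w ᵥ* incidenceMatrix g) ⬝ᵥ α := by rw [← hflow, dotProduct_mulVec]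
      _ = _ := by simp only [dotProduct, vecMul_incidenceMatrix]
  have hnonpos : ∑ σ, (w (g σ).1 - w (g σ).2) * α σ ≤ 0 := by
    refine Finset.sum_nonpos fun σ _ => ?_
    rcases (hα σ).eq_or_lt with h0 | hpos
    · simp [← h0]
    · exact mul_nonpos_of_nonpos_of_nonneg (sub_nonpos.2 (hw σ hpos)) hpos.le
  linarith

lemma reflTransGen_of_incidenceMatrix_mulVec_eq [Fintype V] {α : E → ℝ} (hα : ∀ σ, 0 ≤ α σ)
    {a b : V} (hflow : incidenceMatrix g *ᵥ α = Pi.single a 1 - Pi.single b 1) :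
    ReflTransGen (fun x y => ∃ σ, g σ = (x, y)) a b := by
  classical
  set reach := ReflTransGen (fun x y => ∃ σ, 0 < α σ ∧ g σ = (x, y)) a
  set w : V → ℝ := fun i => if reach i then 1 else 0
  have hw : ∀ σ, 0 < α σ → w (g σ).1 ≤ w (g σ).2 := by
    intro σ hσ
    by_cases hsrc : reach (g σ).1
    · have htgt : reach (g σ).2 := hsrc.tail ⟨σ, hσ, rfl⟩
      simp [w, hsrc, htgt]
    · simp only [w, hsrc, if_false]
      split_ifs <;> norm_num
  have hb : reach b := by
    by_contra hb
    have hab := le_of_incidenceMatrix_mulVec_eq g hα hflow w hw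
    norm_num [w, reach, hb, ReflTransGen.refl] at hab
  exact ReflTransGen.mono (fun x y ⟨σ, _, hσ⟩ => ⟨σ, hσ⟩) _ _ hb

lemma reflTransGen_iff_single_sub_single_mem_hull [Fintype V] (a b : V) :
    ReflTransGen (fun x y => ∃ σ, g σ = (x, y)) a b ↔
      Pi.single a 1 - Pi.single b 1 ∈ hull ℝ (Set.range (incidenceMatrix g).col) := by
  refine ⟨single_sub_single_mem_hull_of_reflTransGen g, fun h => ?_⟩
  obtain ⟨α, hα, hflow⟩ := (mem_hull_range_col_iff _ _).1 h
  exact reflTransGen_of_incidenceMatrix_mulVec_eq g hα hflow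

end Matrix

theorem stmt0_general (q p : ℕ) (g : Fin p → Fin q × Fin q)
    (G : Matrix (Fin q) (Fin p) ℝ)
    (hG : ∀ i σ, G i σ =
      (if i = (g σ).1 then (1 : ℝ) else 0) - (if i = (g σ).2 then 1 else 0))
    (k ℓ : Fin q) :
    (Relation.ReflTransGen (fun a b => ∃ σ, g σ = (a, b)) k ℓ ∧
      Relation.ReflTransGen (fun a b => ∃ σ, g σ = (a, b)) ℓ k) ↔
    ∀ x ∈ Submodule.span ℝ
        ({fun i => (if i = k then (1 : ℝ) else 0) - (if i = ℓ then 1 else 0)} :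
          Set (Fin q → ℝ)),
      x ∈ {y : Fin q → ℝ | ∃ α : Fin p → ℝ, (∀ σ, 0 ≤ α σ) ∧ G.mulVec α = y} := by
  obtain rfl : G = incidenceMatrix g := by
    ext i σ
    simp [hG, incidenceMatrix, Pi.single_apply]
  have he : (fun i => (if i = k then (1 : ℝ) else 0) - (if i = ℓ then 1 else 0)) =
      Pi.single k 1 - Pi.single ℓ 1 := by
    ext i
    simp [Pi.single_apply]
  simp_rw [he, Set.mem_ofPred_eq, ← mem_hull_range_col_iff]
  change _ ↔ ofSubmodule (Submodule.span ℝ {_}) ≤ _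
  rw [ofSubmodule_span_singleton_le_iff, neg_sub, reflTransGen_iff_single_sub_single_mem_hull,
    reflTransGen_iff_single_sub_single_mem_hull]

/-- strong (k,ℓ)-connectivity of a directed graph iff the cone of its
incidence matrix contains the line spanned by `e_k - e_ℓ`. -/
theorem stmt0 (q p : ℕ) (g : Fin p → Fin q × Fin q)
    (hg : ∀ σ, (g σ).1 ≠ (g σ).2)
    (G : Matrix (Fin q) (Fin p) ℝ)
    (hG : ∀ i σ, G i σ =
      (if i = (g σ).1 then (1 : ℝ) else 0) - (if i = (g σ).2 then 1 else 0))
    (k ℓ : Fin q) (hkl : k ≠ ℓ) :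
    (Relation.ReflTransGen (fun a b => ∃ σ, g σ = (a, b)) k ℓ ∧
      Relation.ReflTransGen (fun a b => ∃ σ, g σ = (a, b)) ℓ k) ↔
    ∀ x ∈ Submodule.span ℝ
        ({fun i => (if i = k then (1 : ℝ) else 0) - (if i = ℓ then 1 else 0)} :
          Set (Fin q → ℝ)),
      x ∈ {y : Fin q → ℝ | ∃ α : Fin p → ℝ, (∀ σ, 0 ≤ α σ) ∧ G.mulVec α = y} :=
  stmt0_general q p g G hG k ℓ
end

section
/- Let G be the incidence matrix of a directed graph Γ on q vertices. Then there exists an undirected path between vertices k and ℓ if and only if the range (column space) of G contains the line spanned by e_k - e_ℓ. -/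
/-!
A path from `a` to `b` writes `e_a - e_b` as a telescoping signed sum of edge columns `e_i - e_j`.
Conversely, the indicator `f` of the connected component of `a` takes equal values at the two ends
of every edge, so `v ↦ f ⬝ᵥ v` kills the column space of the incidence matrix; on `e_a - e_b` it
equals `f a - f b = 1 - f b`, which forces `b` into the component of `a`.
-/

open Matrix Relation Set Submodule

variable {V E R : Type*}

def UndirectedAdj (g : E → V × V) (a b : V) : Prop :=
  ∃ σ, g σ = (a, b) ∨ g σ = (b, a)

theorem UndirectedAdj.symm {g : E → V × V} {a b : V} (h : UndirectedAdj g a b) :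
    UndirectedAdj g b a := by
  obtain ⟨σ, hσ⟩ := h
  exact ⟨σ, hσ.symm⟩

theorem undirectedAdj_fst_snd (g : E → V × V) (σ : E) : UndirectedAdj g (g σ).1 (g σ).2 :=
  ⟨σ, Or.inl rfl⟩

variable [DecidableEq V] [CommRing R]

variable (R) in
/-- The column of the incidence matrix belonging to the edge `σ`. -/
def edgeVec (g : E → V × V) (σ : E) : V → R :=
  Pi.single (g σ).1 1 - Pi.single (g σ).2 1

theorem single_sub_single_mem_of_reflTransGen {g : E → V × V} {S : Submodule R (V → R)}
    (hS : ∀ σ, edgeVec R g σ ∈ S) {a b : V} (h : ReflTransGen (UndirectedAdj g) a b) :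
    (Pi.single a 1 - Pi.single b 1 : V → R) ∈ S := by
  induction h with
  | refl => simp
  | @tail b c _ hbc ih =>
    obtain ⟨σ, hσ | hσ⟩ := hbc
    · convert S.add_mem ih (hS σ) using 1
      simp [edgeVec, hσ]
    · convert S.sub_mem ih (hS σ) using 1
      simp [edgeVec, hσ]

theorem dotProduct_single_sub_single [Fintype V] (f : V → R) (a b : V) :
    f ⬝ᵥ (Pi.single a 1 - Pi.single b 1) = f a - f b := by
  simp [dotProduct_sub, dotProduct_single]

theorem reflTransGen_of_single_sub_single_mem_span [Fintype V] [Nontrivial R]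
    {g : E → V × V} {a b : V}
    (h : (Pi.single a 1 - Pi.single b 1 : V → R) ∈ span R (range (edgeVec R g))) :
    ReflTransGen (UndirectedAdj g) a b := by
  classical
  set f : V → R := fun i => if ReflTransGen (UndirectedAdj g) a i then 1 else 0 with hf
  have hf_edge : ∀ σ, f (g σ).1 = f (g σ).2 := by
    intro σ
    have hσ := undirectedAdj_fst_snd g σ
    have : ReflTransGen (UndirectedAdj g) a (g σ).1 ↔ ReflTransGen (UndirectedAdj g) a (g σ).2 :=
      ⟨fun h => h.tail hσ, fun h => h.tail hσ.symm⟩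
    simp only [hf, this]
  have hf_span : ∀ v ∈ span R (range (edgeVec R g)), f ⬝ᵥ v = 0 := by
    intro v hv
    induction hv using span_induction with
    | mem v hv =>
      obtain ⟨σ, rfl⟩ := hv
      rw [edgeVec, dotProduct_single_sub_single, hf_edge, sub_self]
    | zero => exact dotProduct_zero f
    | add v w _ _ hv hw => rw [dotProduct_add, hv, hw, add_zero]
    | smul r v _ hv => rw [dotProduct_smul, hv, smul_zero]
  have hfb : f b = 1 := by
    have := hf_span _ h
    rw [dotProduct_single_sub_single, sub_eq_zero] at this
    simpa [hf, ReflTransGen.refl] using this.symm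
  by_contra hab
  simp [hf, hab] at hfb

theorem single_sub_single_mem_span_edgeVec_iff [Fintype V] [Nontrivial R]
    {g : E → V × V} {a b : V} :
    (Pi.single a 1 - Pi.single b 1 : V → R) ∈ span R (range (edgeVec R g)) ↔
      ReflTransGen (UndirectedAdj g) a b :=
  ⟨reflTransGen_of_single_sub_single_mem_span,
    single_sub_single_mem_of_reflTransGen fun σ => subset_span (mem_range_self σ)⟩

theorem stmt1_general (q p : ℕ) (g : Fin p → Fin q × Fin q)
    (G : Matrix (Fin q) (Fin p) ℝ)
    (hG : ∀ i σ, G i σ =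
      (if i = (g σ).1 then (1 : ℝ) else 0) - (if i = (g σ).2 then 1 else 0))
    (k ℓ : Fin q) :
    Relation.ReflTransGen (fun a b => ∃ σ, g σ = (a, b) ∨ g σ = (b, a)) k ℓ ↔
    Submodule.span ℝ
        ({fun i => (if i = k then (1 : ℝ) else 0) - (if i = ℓ then 1 else 0)} :
          Set (Fin q → ℝ)) ≤ LinearMap.range G.mulVecLin := by
  have hcol : G.col = edgeVec ℝ g := by
    ext σ i
    simp [edgeVec, hG, Pi.single_apply]
  have hvec : (fun i => (if i = k then (1 : ℝ) else 0) - (if i = ℓ then 1 else 0)) =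
      Pi.single k 1 - Pi.single ℓ 1 := by
    ext i
    simp [Pi.single_apply]
  rw [span_singleton_le_iff_mem, range_mulVecLin, hcol, hvec,
    single_sub_single_mem_span_edgeVec_iff]
  rfl

/-- (k,ℓ)-connectivity (undirected path) of a directed graph iff the
column space of its incidence matrix contains the line spanned by `e_k - e_ℓ`. -/
theorem stmt1 (q p : ℕ) (g : Fin p → Fin q × Fin q)
    (hg : ∀ σ, (g σ).1 ≠ (g σ).2)
    (G : Matrix (Fin q) (Fin p) ℝ)
    (hG : ∀ i σ, G i σ =
      (if i = (g σ).1 then (1 : ℝ) else 0) - (if i = (g σ).2 then 1 else 0))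
    (k ℓ : Fin q) (hkl : k ≠ ℓ) :
    Relation.ReflTransGen (fun a b => ∃ σ, g σ = (a, b) ∨ g σ = (b, a)) k ℓ ↔
    Submodule.span ℝ
        ({fun i => (if i = k then (1 : ℝ) else 0) - (if i = ℓ then 1 else 0)} :
          Set (Fin q → ℝ)) ≤ LinearMap.range G.mulVecLin :=
  stmt1_general q p g G hG k ℓ
end

section
/- Consider an array of q ≥ 2 identical LTI systems ẋ_i = A x_i + Σ_σ B_{iσ} u_σ with relative actuation Σ_i B_{iσ} = 0 for each σ. Write the array as ẋ = 𝐀x + 𝐁u with 𝐀 = I_q ⊗ A and 𝐁 the stacked matrix of the B_{iσ}, and let 𝐖 = [𝐁 𝐀𝐁 ⋯ 𝐀^{n-1}𝐁]. Then the array is controllable (every initial condition can be driven in finite time to the synchronization subspace S_n = range(1_q ⊗ I_n)) if and only if range 𝐖 ⊇ S_n^⊥. -/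
/-!
Write `M = 1 ⊗ A` and let `V` be the reachable subspace, the smallest `M`-invariant subspace
containing `range B`; by Cayley–Hamilton for `A` it is the range of the controllability matrix
with `n` blocks. Every forced response lies in `V`, and conversely every vector of `V` is a forced
response in unit time, because the controllability Gramian is injective on `V`. As `S_n` and `V`
are `M`-invariant, so is `S_n + V`, and `e^{τM}` preserves it; hence the array is controllable iff
`S_n + V` is the whole space. Relative actuation puts `V` inside `S_n^⊥`, and by the modular law
`S_n + V = ⊤` iff `S_n^⊥ ⊆ V`.
-/

open Matrix Kronecker

/-- Controllability matrix `[B  MB  ⋯  M^{N-1}B]` with columns indexed by `Fin N × J`. -/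
noncomputable def ctrb {ι J : Type*} [Fintype ι] [DecidableEq ι] (M : Matrix ι ι ℝ) (B : Matrix ι J ℝ)
    (N : ℕ) : Matrix ι (Fin N × J) ℝ :=
  Matrix.of fun x rσ => ((M ^ (rσ.1 : ℕ)) * B) x rσ.2

open NormedSpace Topology Polynomial MeasureTheory

noncomputable section

section Exponential

variable {ι J : Type*} [Fintype ι] [DecidableEq ι] [Fintype J]

def mulVecStabilizer (U : Submodule ℝ (ι → ℝ)) : Subalgebra ℝ (Matrix ι ι ℝ) where
  carrier := {X | ∀ v ∈ U, X *ᵥ v ∈ U}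
  mul_mem' {X Y} hX hY v hv := by rw [← mulVec_mulVec]; exact hX _ (hY v hv)
  add_mem' {X Y} hX hY v hv := by rw [add_mulVec]; exact U.add_mem (hX v hv) (hY v hv)
  algebraMap_mem' r v hv := by
    rw [Algebra.algebraMap_eq_smul_one, smul_mulVec, one_mulVec]; exact U.smul_mem r hv

lemma isClosed_mulVecStabilizer (U : Submodule ℝ (ι → ℝ)) :
    IsClosed (mulVecStabilizer U : Set (Matrix ι ι ℝ)) := by
  have : (mulVecStabilizer U : Set (Matrix ι ι ℝ)) = ⋂ v ∈ U, (· *ᵥ v) ⁻¹' U := by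
    ext X; simp [mulVecStabilizer]
  rw [this]
  exact isClosed_biInter fun v _ =>
    U.closed_of_finiteDimensional.preimage (continuous_id.matrix_mulVec continuous_const)

lemma exp_smul_mulVec_mem {U : Submodule ℝ (ι → ℝ)} {N : Matrix ι ι ℝ}
    (hN : ∀ v ∈ U, N *ᵥ v ∈ U) (c : ℝ) {v : ι → ℝ} (hv : v ∈ U) : exp (c • N) *ᵥ v ∈ U :=
  exp_mem (isClosed_mulVecStabilizer U)
    (Subalgebra.smul_mem _ (show N ∈ mulVecStabilizer U from hN) c) v hv

lemma exp_neg_smul_mul_exp_smul (N : Matrix ι ι ℝ) (c : ℝ) :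
    exp (-c • N) * exp (c • N) = 1 := by
  rw [← Matrix.exp_add_of_commute _ _ ((Commute.refl N).smul_left _ |>.smul_right _), neg_smul,
    neg_add_cancel, exp_zero]

open scoped Matrix.Norms.Operator in
lemma continuous_exp_smul (N : Matrix ι ι ℝ) : Continuous fun t : ℝ => exp (t • N) :=
  exp_continuous.comp (continuous_id.smul continuous_const)

open scoped Matrix.Norms.Operator in
lemma hasDerivAt_vecMul_exp_smul_vecMul (w : ι → ℝ) (N : Matrix ι ι ℝ) (B : Matrix ι J ℝ)
    (s : ℝ) :
    HasDerivAt (fun t : ℝ => w ᵥ* exp (t • N) ᵥ* B) (w ᵥ* N ᵥ* exp (s • N) ᵥ* B) s := by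
  let L : Matrix ι ι ℝ →L[ℝ] (J → ℝ) := LinearMap.toContinuousLinearMap
    { toFun := fun X => w ᵥ* X ᵥ* B
      map_add' := fun X Y => by simp [vecMul_add, add_vecMul]
      map_smul' := fun c X => by simp [vecMul_smul, smul_vecMul] }
  refine (L.hasFDerivAt.comp_hasDerivAt s (hasDerivAt_exp_smul_const' (𝕂 := ℝ) N s)).congr_deriv ?_
  show w ᵥ* (N * exp (s • N)) ᵥ* B = _
  simp only [vecMul_vecMul, Matrix.mul_assoc]

/-- Differentiate repeatedly on `(0, ε)`, then let `s → 0`. -/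
lemma vecMul_pow_vecMul_eq_zero {ε : ℝ} (hε : 0 < ε) {z : ι → ℝ} {N : Matrix ι ι ℝ}
    {B : Matrix ι J ℝ} (h : ∀ s ∈ Set.Ioo 0 ε, z ᵥ* exp (s • N) ᵥ* B = 0) (k : ℕ) :
    z ᵥ* N ^ k ᵥ* B = 0 := by
  have step : ∀ w : ι → ℝ, (∀ s ∈ Set.Ioo 0 ε, w ᵥ* exp (s • N) ᵥ* B = 0) →
      ∀ s ∈ Set.Ioo 0 ε, w ᵥ* N ᵥ* exp (s • N) ᵥ* B = 0 := by
    intro w hw s hs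
    have hloc : (fun t : ℝ => w ᵥ* exp (t • N) ᵥ* B) =ᶠ[𝓝 s] fun _ => 0 :=
      Filter.eventually_of_mem (Ioo_mem_nhds hs.1 hs.2) hw
    exact (hasDerivAt_vecMul_exp_smul_vecMul w N B s).unique
      ((hasDerivAt_const s 0).congr_of_eventuallyEq hloc)
  have hk : ∀ s ∈ Set.Ioo 0 ε, z ᵥ* N ^ k ᵥ* exp (s • N) ᵥ* B = 0 := by
    induction k with
    | zero => simpa using h
    | succ k ih => simpa only [pow_succ, ← vecMul_vecMul] using step _ ih
  have hcont : Continuous fun s : ℝ => z ᵥ* N ^ k ᵥ* exp (s • N) ᵥ* B :=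
    (continuous_const.matrix_vecMul (continuous_exp_smul N)).matrix_vecMul continuous_const
  have h0 : (0 : ℝ) ∈ closure (Set.Ioo 0 ε) := by
    rw [closure_Ioo hε.ne]; exact Set.left_mem_Icc.2 hε.le
  simpa using Set.EqOn.closure (g := 0) hk hcont continuous_const h0

end Exponential

section Reachable

variable {ι J : Type*} [Fintype ι] [DecidableEq ι] [Fintype J]
  (N : Matrix ι ι ℝ) (B : Matrix ι J ℝ)

def reachableSubspace : Submodule ℝ (ι → ℝ) :=
  ⨆ k : ℕ, LinearMap.range (N ^ k * B).mulVecLin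

lemma pow_mul_mulVec_mem_reachableSubspace (k : ℕ) (c : J → ℝ) :
    (N ^ k * B) *ᵥ c ∈ reachableSubspace N B :=
  Submodule.mem_iSup_of_mem k ⟨c, rfl⟩

lemma mulVec_mem_reachableSubspace (c : J → ℝ) : B *ᵥ c ∈ reachableSubspace N B := by
  simpa using pow_mul_mulVec_mem_reachableSubspace N B 0 c

variable {N B}

lemma mulVec_mem_reachableSubspace_of_mem {v : ι → ℝ} (hv : v ∈ reachableSubspace N B) :
    N *ᵥ v ∈ reachableSubspace N B := by
  induction hv using Submodule.iSup_induction' with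
  | mem k v hv =>
    obtain ⟨c, rfl⟩ := hv
    rw [mulVecLin_apply, mulVec_mulVec, ← Matrix.mul_assoc, ← pow_succ']
    exact pow_mul_mulVec_mem_reachableSubspace N B _ c
  | zero => simp
  | add v w _ _ hv hw => rw [mulVec_add]; exact add_mem hv hw

lemma reachableSubspace_le {U : Submodule ℝ (ι → ℝ)} (hN : ∀ v ∈ U, N *ᵥ v ∈ U)
    (hB : ∀ c, B *ᵥ c ∈ U) : reachableSubspace N B ≤ U := by
  refine iSup_le fun k => ?_
  rintro _ ⟨c, rfl⟩
  induction k with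
  | zero => simpa using hB c
  | succ k ih => rw [mulVecLin_apply, pow_succ', Matrix.mul_assoc, ← mulVec_mulVec]; exact hN _ ih

lemma dotProduct_eq_zero_of_mem_reachableSubspace {z : ι → ℝ} (hz : ∀ k, z ᵥ* N ^ k ᵥ* B = 0)
    {v : ι → ℝ} (hv : v ∈ reachableSubspace N B) : z ⬝ᵥ v = 0 := by
  suffices reachableSubspace N B ≤ LinearMap.ker (dotProductEquiv ℝ ι z) from this hv
  refine iSup_le fun k => ?_
  rintro _ ⟨c, rfl⟩
  simp [dotProduct_mulVec, ← vecMul_vecMul, hz k]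

lemma ctrb_mulVec (m : ℕ) (a : Fin m × J → ℝ) :
    ctrb N B m *ᵥ a = ∑ k : Fin m, (N ^ (k : ℕ) * B) *ᵥ fun σ => a (k, σ) := by
  ext x
  simp [ctrb, mulVec, dotProduct, Fintype.sum_prod_type, Finset.sum_apply]

lemma range_ctrb_eq_reachableSubspace {m : ℕ}
    (hm : ∀ k, N ^ k ∈ Submodule.span ℝ (Set.range fun i : Fin m => N ^ (i : ℕ))) :
    LinearMap.range (ctrb N B m).mulVecLin = reachableSubspace N B := by
  apply le_antisymm
  · rintro _ ⟨a, rfl⟩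
    rw [mulVecLin_apply, ctrb_mulVec]
    exact Submodule.sum_mem _ fun k _ => pow_mul_mulVec_mem_reachableSubspace N B _ _
  · refine iSup_le fun k => ?_
    rintro _ ⟨c, rfl⟩
    obtain ⟨a, ha⟩ := (Submodule.mem_span_range_iff_exists_fun ℝ).1 (hm k)
    refine ⟨fun iσ => a iσ.1 * c iσ.2, ?_⟩
    rw [mulVecLin_apply, mulVecLin_apply, ctrb_mulVec, ← ha, Matrix.sum_mul, Matrix.sum_mulVec]
    refine Finset.sum_congr rfl fun i _ => ?_
    rw [Matrix.smul_mul, smul_mulVec, ← mulVec_smul]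
    rfl

end Reachable

lemma pow_mem_span_pow_of_aeval_eq_zero {R S : Type*} [CommRing R] [Nontrivial R] [Ring S]
    [Algebra R S] {x : S} {p : R[X]} (hp : p.Monic) (hx : aeval x p = 0) (k : ℕ) :
    x ^ k ∈ Submodule.span R (Set.range fun i : Fin p.natDegree => x ^ (i : ℕ)) := by
  refine PowerBasis.mem_span_pow'.2
    ⟨X ^ k %ₘ p, (degree_modByMonic_lt _ hp).trans_le degree_le_natDegree, ?_⟩
  conv_lhs => rw [← aeval_X_pow (R := R) (x := x), ← modByMonic_add_div (X ^ k) p]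
  simp [hx]

lemma intervalIntegral_mem_submodule {E : Type*} [NormedAddCommGroup E] [NormedSpace ℝ E]
    [CompleteSpace E] (U : Submodule ℝ E) [CompleteSpace U] {f : ℝ → E} (hf : ∀ t, f t ∈ U)
    (a b : ℝ) : ∫ t in a..b, f t ∈ U := by
  have h := U.subtypeₗᵢ.intervalIntegral_comp_comm (μ := volume) (a := a) (b := b)
    fun t => (⟨f t, hf t⟩ : U)
  have h' : ∫ t in a..b, f t = U.subtypeₗᵢ (∫ t in a..b, ⟨f t, hf t⟩) := h
  exact h' ▸ Submodule.coe_mem _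

lemma eqOn_zero_of_intervalIntegral_eq_zero {f : ℝ → ℝ} (hf : Continuous f) (hf0 : 0 ≤ f)
    {a b : ℝ} (hab : a ≤ b) (h : ∫ t in a..b, f t = 0) : Set.EqOn f 0 (Set.Ioc a b) := by
  have hae := (intervalIntegral.integral_eq_zero_iff_of_le_of_nonneg_ae hab
    (Filter.Eventually.of_forall hf0) (hf.intervalIntegrable a b)).1 h
  exact Measure.eqOn_Ioc_of_ae_eq (μ := volume) hae hf.continuousOn continuousOn_const

section Gramian

variable {ι J : Type*} [Fintype ι] [DecidableEq ι] (N : Matrix ι ι ℝ) (B : Matrix ι J ℝ)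

/-- The minimum-energy control steering the origin to `gramian N B z` in unit time. -/
def gramianControl (z : ι → ℝ) (t : ℝ) : J → ℝ :=
  z ᵥ* exp ((1 - t) • N) ᵥ* B

lemma continuous_gramianControl (z : ι → ℝ) : Continuous (gramianControl N B z) :=
  (continuous_const.matrix_vecMul
    ((continuous_exp_smul N).comp (continuous_const.sub continuous_id))).matrix_vecMul
    continuous_const

variable [Fintype J]

def forcedResponse (τ : ℝ) (u : ℝ → J → ℝ) : ι → ℝ :=
  ∫ t in (0 : ℝ)..τ, exp ((τ - t) • N) *ᵥ (B *ᵥ u t)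

lemma forcedResponse_mem_reachableSubspace (τ : ℝ) (u : ℝ → J → ℝ) :
    forcedResponse N B τ u ∈ reachableSubspace N B :=
  intervalIntegral_mem_submodule _ (fun _ => exp_smul_mulVec_mem
    (fun _ => mulVec_mem_reachableSubspace_of_mem) _ (mulVec_mem_reachableSubspace N B _)) _ _

lemma continuous_forcedResponse_integrand (τ : ℝ) {u : ℝ → J → ℝ} (hu : Continuous u) :
    Continuous fun t => exp ((τ - t) • N) *ᵥ (B *ᵥ u t) :=
  ((continuous_exp_smul N).comp (continuous_const.sub continuous_id)).matrix_mulVec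
    (continuous_const.matrix_mulVec hu)

/-- The controllability Gramian `∫₀¹ e^{(1-t)N} B Bᵀ e^{(1-t)Nᵀ} dt`. -/
def gramian : (ι → ℝ) →ₗ[ℝ] (ι → ℝ) where
  toFun z := forcedResponse N B 1 (gramianControl N B z)
  map_add' z w := by
    have hi := fun z => (continuous_forcedResponse_integrand N B 1
      (continuous_gramianControl N B z)).intervalIntegrable (μ := volume) 0 1
    simp only [forcedResponse, gramianControl, add_vecMul, mulVec_add]
    exact intervalIntegral.integral_add (hi z) (hi w)
  map_smul' c z := by
    simp only [forcedResponse, gramianControl, smul_vecMul, mulVec_smul, RingHom.id_apply]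
    exact intervalIntegral.integral_smul c _

lemma dotProduct_gramian (z : ι → ℝ) :
    z ⬝ᵥ gramian N B z =
      ∫ t in (0 : ℝ)..1, gramianControl N B z t ⬝ᵥ gramianControl N B z t := by
  let L := LinearMap.toContinuousLinearMap (dotProductEquiv ℝ ι z)
  have h := L.intervalIntegral_comp_comm (μ := volume) <|
    (continuous_forcedResponse_integrand N B 1 (continuous_gramianControl N B z)).intervalIntegrable
      0 1
  simp only [L, LinearMap.coe_toContinuousLinearMap', dotProductEquiv_apply_apply] at h
  rw [gramian, LinearMap.coe_mk, AddHom.coe_mk, forcedResponse, ← h]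
  simp only [dotProduct_mulVec, gramianControl]

variable {N B}

lemma vecMul_pow_vecMul_eq_zero_of_gramian_eq_zero {z : ι → ℝ} (hz : gramian N B z = 0)
    (k : ℕ) : z ᵥ* N ^ k ᵥ* B = 0 := by
  have hsq : Set.EqOn (fun t => gramianControl N B z t ⬝ᵥ gramianControl N B z t) 0
      (Set.Ioc 0 1) := by
    refine eqOn_zero_of_intervalIntegral_eq_zero
      (f := fun t => gramianControl N B z t ⬝ᵥ gramianControl N B z t) ?_
      (fun _ => Finset.sum_nonneg fun _ _ => mul_self_nonneg _) zero_le_one ?_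
    · exact (continuous_gramianControl N B z).dotProduct (continuous_gramianControl N B z)
    · rw [← dotProduct_gramian, hz, dotProduct_zero]
  refine vecMul_pow_vecMul_eq_zero one_pos (fun s hs => ?_) k
  have h := dotProduct_self_eq_zero.1 (hsq ⟨sub_pos.2 hs.2, sub_le_self 1 hs.1.le⟩)
  simpa [gramianControl] using h

lemma eq_zero_of_mem_reachableSubspace_of_gramian_eq_zero {z : ι → ℝ}
    (hz : z ∈ reachableSubspace N B) (h : gramian N B z = 0) : z = 0 :=
  dotProduct_self_eq_zero.1 <| dotProduct_eq_zero_of_mem_reachableSubspace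
    (vecMul_pow_vecMul_eq_zero_of_gramian_eq_zero h) hz

/-- The Gramian is injective, hence bijective, on the reachable subspace. -/
lemma exists_continuous_forcedResponse_eq {r : ι → ℝ} (hr : r ∈ reachableSubspace N B) :
    ∃ u : ℝ → J → ℝ, Continuous u ∧ forcedResponse N B 1 u = r := by
  let G := (gramian N B).restrict (p := reachableSubspace N B) (q := reachableSubspace N B)
    fun z _ => forcedResponse_mem_reachableSubspace N B 1 _
  have hG : Function.Injective G := by
    rw [← LinearMap.ker_eq_bot, Submodule.eq_bot_iff]
    intro z hz
    exact Subtype.ext <|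
      eq_zero_of_mem_reachableSubspace_of_gramian_eq_zero z.2 (congrArg Subtype.val hz)
  obtain ⟨z, hz⟩ := LinearMap.injective_iff_surjective.1 hG ⟨r, hr⟩
  exact ⟨gramianControl N B z, continuous_gramianControl N B z, congrArg Subtype.val hz⟩

end Gramian

section Steering

variable {ι J : Type*} [Fintype ι] [DecidableEq ι] [Fintype J] {N : Matrix ι ι ℝ}
  (B : Matrix ι J ℝ)

theorem forall_exists_exp_add_forcedResponse_mem_iff {S : Submodule ℝ (ι → ℝ)}
    (hS : ∀ v ∈ S, N *ᵥ v ∈ S) :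
    (∀ x₀ : ι → ℝ, ∃ τ > (0 : ℝ), ∃ u : ℝ → J → ℝ, Continuous u ∧
      exp (τ • N) *ᵥ x₀ + forcedResponse N B τ u ∈ S) ↔
    S ⊔ reachableSubspace N B = ⊤ := by
  constructor
  · intro h
    have hSV : ∀ v ∈ S ⊔ reachableSubspace N B, N *ᵥ v ∈ S ⊔ reachableSubspace N B := by
      intro v hv
      obtain ⟨s, hs, r, hr, rfl⟩ := Submodule.mem_sup.1 hv
      rw [mulVec_add]
      exact Submodule.add_mem_sup (hS s hs) (mulVec_mem_reachableSubspace_of_mem hr)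
    refine eq_top_iff.2 fun x₀ _ => ?_
    obtain ⟨τ, -, u, -, hx⟩ := h x₀
    have hτ : exp (τ • N) *ᵥ x₀ ∈ S ⊔ reachableSubspace N B := by
      simpa using Submodule.sub_mem _ (Submodule.mem_sup_left hx)
        (Submodule.mem_sup_right (forcedResponse_mem_reachableSubspace N B τ u))
    have h₀ := exp_smul_mulVec_mem hSV (-τ) hτ
    rwa [mulVec_mulVec, exp_neg_smul_mul_exp_smul, one_mulVec] at h₀
  · intro h x₀
    obtain ⟨s, hs, r, hr, hsr⟩ :=
      Submodule.mem_sup.1 (h ▸ Submodule.mem_top : exp ((1 : ℝ) • N) *ᵥ x₀ ∈ _)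
    obtain ⟨u, hu, hur⟩ := exists_continuous_forcedResponse_eq (Submodule.neg_mem _ hr)
    refine ⟨1, one_pos, u, hu, ?_⟩
    rwa [hur, ← hsr, add_neg_cancel_right]

end Steering

lemma sup_eq_top_iff_le_of_isCompl {α : Type*} [Lattice α] [BoundedOrder α] [IsModularLattice α]
    {S T V : α} (hST : IsCompl S T) (hVT : V ≤ T) : S ⊔ V = ⊤ ↔ T ≤ V := by
  constructor
  · intro h
    apply le_of_eq
    calc T = (V ⊔ S) ⊓ T := by rw [sup_comm, h, top_inf_eq]
      _ = V := by rw [sup_inf_assoc_of_le S hVT, hST.inf_eq_bot, sup_bot_eq]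
  · intro h
    exact eq_top_iff.2 (hST.sup_eq_top ▸ sup_le_sup_left h S)

section Array

variable {α β : Type*}

variable (α β) in
/-- The synchronization subspace `S_n = range (1_q ⊗ I_n)`. -/
def syncSubspace : Submodule ℝ (α × β → ℝ) :=
  LinearMap.range (LinearMap.funLeft ℝ ℝ (Prod.snd : α × β → β))

lemma mem_syncSubspace {y : α × β → ℝ} :
    y ∈ syncSubspace α β ↔ ∃ w : β → ℝ, ∀ i j, y (i, j) = w j := by
  simp only [syncSubspace, LinearMap.mem_range, LinearMap.funLeft_apply, funext_iff, Prod.forall]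
  exact exists_congr fun w => forall₂_congr fun _ _ => eq_comm

variable [Fintype α]

/-- `1_qᵀ ⊗ I_n`, whose kernel is `S_n^⊥`. -/
def blockSum : (α × β → ℝ) →ₗ[ℝ] (β → ℝ) :=
  ∑ i : α, LinearMap.funLeft ℝ ℝ (Prod.mk i)

lemma blockSum_apply (x : α × β → ℝ) (j : β) : blockSum x j = ∑ i, x (i, j) := by
  simp [blockSum, Finset.sum_apply, LinearMap.funLeft_apply]

lemma blockSum_comp_snd (w : β → ℝ) :
    blockSum (w ∘ Prod.snd : α × β → ℝ) = Fintype.card α • w := by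
  ext j
  simp [blockSum_apply]

variable [Fintype β]

lemma dotProduct_comp_snd (x : α × β → ℝ) (w : β → ℝ) :
    x ⬝ᵥ (w ∘ Prod.snd) = blockSum x ⬝ᵥ w := by
  simp only [dotProduct, Fintype.sum_prod_type, blockSum_apply, Finset.sum_mul]
  exact Finset.sum_comm

lemma blockSum_eq_zero_iff (x : α × β → ℝ) :
    blockSum x = 0 ↔ ∀ y ∈ syncSubspace α β, x ⬝ᵥ y = 0 := by
  constructor
  · rintro hx _ ⟨w, rfl⟩
    show x ⬝ᵥ (w ∘ Prod.snd) = 0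
    rw [dotProduct_comp_snd, hx, zero_dotProduct]
  · intro h
    have := h (blockSum x ∘ Prod.snd) ⟨blockSum x, rfl⟩
    rwa [dotProduct_comp_snd, dotProduct_self_eq_zero] at this

lemma isCompl_syncSubspace_ker_blockSum [Nonempty α] :
    IsCompl (syncSubspace α β) (LinearMap.ker blockSum) := by
  constructor
  · rw [Submodule.disjoint_def]
    rintro _ ⟨w, rfl⟩ hw
    rw [← dotProduct_self_eq_zero]
    exact (blockSum_eq_zero_iff _).1 hw _ ⟨w, rfl⟩
  · rw [Submodule.codisjoint_iff_exists_add_eq]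
    intro x
    let w : β → ℝ := (Fintype.card α : ℝ)⁻¹ • blockSum x
    refine ⟨w ∘ Prod.snd, x - w ∘ Prod.snd, ⟨w, rfl⟩, ?_, add_sub_cancel _ _⟩
    rw [LinearMap.mem_ker, map_sub, blockSum_comp_snd, ← Nat.cast_smul_eq_nsmul ℝ, smul_smul,
      mul_inv_cancel₀ (Nat.cast_ne_zero.2 Fintype.card_ne_zero), one_smul, sub_self]

variable [DecidableEq α] (A : Matrix β β ℝ)

lemma one_kronecker_mulVec_apply (x : α × β → ℝ) (i : α) (j : β) :
    ((1 : Matrix α α ℝ) ⊗ₖ A *ᵥ x) (i, j) = (A *ᵥ fun j' => x (i, j')) j := by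
  simp [mulVec, dotProduct, Fintype.sum_prod_type, one_apply]

lemma one_kronecker_mulVec_mem_syncSubspace {y : α × β → ℝ} (hy : y ∈ syncSubspace α β) :
    (1 : Matrix α α ℝ) ⊗ₖ A *ᵥ y ∈ syncSubspace α β := by
  obtain ⟨w, rfl⟩ := hy
  refine ⟨A *ᵥ w, funext fun ⟨i, j⟩ => ?_⟩
  rw [one_kronecker_mulVec_apply]
  rfl

lemma blockSum_one_kronecker_mulVec (x : α × β → ℝ) :
    blockSum ((1 : Matrix α α ℝ) ⊗ₖ A *ᵥ x) = A *ᵥ blockSum x := by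
  ext j
  simp only [blockSum_apply, one_kronecker_mulVec_apply]
  simp only [mulVec, dotProduct, blockSum_apply, Finset.mul_sum]
  exact Finset.sum_comm

variable [DecidableEq β]

variable {A} in
lemma reachableSubspace_le_ker_blockSum {J : Type*} [Fintype J] (B : Matrix (α × β) J ℝ)
    (hB : ∀ σ j, ∑ i, B (i, j) σ = 0) :
    reachableSubspace ((1 : Matrix α α ℝ) ⊗ₖ A) B ≤ LinearMap.ker blockSum := by
  refine reachableSubspace_le (fun x hx => ?_) fun c => ?_
  · rw [LinearMap.mem_ker] at hx ⊢
    rw [blockSum_one_kronecker_mulVec, hx, mulVec_zero]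
  · ext j
    simp only [blockSum_apply, mulVec, dotProduct, Pi.zero_apply]
    rw [Finset.sum_comm]
    simp [← Finset.sum_mul, hB]

variable (α) in
def oneKroneckerAlgHom : Matrix β β ℝ →ₐ[ℝ] Matrix (α × β) (α × β) ℝ :=
  AlgHom.ofLinearMap (kroneckerBilinear (R := ℝ) (1 : Matrix α α ℝ)) one_kronecker_one
    fun X Y => show (1 : Matrix α α ℝ) ⊗ₖ (X * Y) = (1 ⊗ₖ X) * (1 ⊗ₖ Y) by
      rw [← mul_kronecker_mul, one_mul]

lemma range_ctrb_one_kronecker {J : Type*} [Fintype J] (B : Matrix (α × β) J ℝ) :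
    LinearMap.range (ctrb ((1 : Matrix α α ℝ) ⊗ₖ A) B (Fintype.card β)).mulVecLin =
      reachableSubspace ((1 : Matrix α α ℝ) ⊗ₖ A) B := by
  apply range_ctrb_eq_reachableSubspace
  have hCH : aeval ((1 : Matrix α α ℝ) ⊗ₖ A) A.charpoly = 0 := by
    rw [show (1 : Matrix α α ℝ) ⊗ₖ A = oneKroneckerAlgHom α A from rfl, aeval_algHom_apply,
      aeval_self_charpoly, map_zero]
  have h := pow_mem_span_pow_of_aeval_eq_zero A.charpoly_monic hCH
  rwa [charpoly_natDegree_eq_dim] at h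

end Array

end

/-- the relatively actuated array `ẋᵢ = Axᵢ + Σ_σ B_{iσ}u_σ` is controllable
(every initial state can be steered in finite time to the synchronization subspace
`S_n = range(1_q ⊗ I_n)`) iff `range 𝐖 ⊇ S_n^⊥`, where `𝐖 = [𝐁 𝐀𝐁 ⋯ 𝐀^{n-1}𝐁]`,
`𝐀 = I_q ⊗ A`. -/
theorem stmt5 (n q p : ℕ) (hq : 2 ≤ q)
    (A : Matrix (Fin n) (Fin n) ℝ)
    (B : Matrix (Fin q × Fin n) (Fin p) ℝ)
    (hB : ∀ σ (j : Fin n), ∑ i : Fin q, B (i, j) σ = 0) :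
    (∀ x0 : Fin q × Fin n → ℝ, ∃ τ > (0 : ℝ), ∃ u : ℝ → Fin p → ℝ, Continuous u ∧
      ∃ v : Fin n → ℝ, ∀ i j,
        ((NormedSpace.exp (τ • ((1 : Matrix (Fin q) (Fin q) ℝ) ⊗ₖ A))).mulVec x0 +
          ∫ t in (0 : ℝ)..τ,
            (NormedSpace.exp ((τ - t) • ((1 : Matrix (Fin q) (Fin q) ℝ) ⊗ₖ A))).mulVec
              (B.mulVec (u t))) (i, j) = v j) ↔
    (∀ x : Fin q × Fin n → ℝ,
      (∀ y : Fin q × Fin n → ℝ, (∃ w : Fin n → ℝ, ∀ i j, y (i, j) = w j) →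
        ∑ z : Fin q × Fin n, x z * y z = 0) →
      ∃ α : Fin n × Fin p → ℝ,
        (ctrb ((1 : Matrix (Fin q) (Fin q) ℝ) ⊗ₖ A) B n).mulVec α = x) := by
  have : Nonempty (Fin q) := ⟨⟨0, by omega⟩⟩
  have hsteer := forall_exists_exp_add_forcedResponse_mem_iff B
    fun _ => one_kronecker_mulVec_mem_syncSubspace (α := Fin q) A
  simp only [forcedResponse, mem_syncSubspace] at hsteer
  rw [hsteer, sup_eq_top_iff_le_of_isCompl isCompl_syncSubspace_ker_blockSum
    (reachableSubspace_le_ker_blockSum B hB), ← range_ctrb_one_kronecker, Fintype.card_fin]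
  simp only [SetLike.le_def, LinearMap.mem_ker, blockSum_eq_zero_iff, mem_syncSubspace,
    dotProduct, LinearMap.mem_range, mulVecLin_apply]
end

section
/- With 𝐀 = I_q ⊗ A, 𝐁 ∈ ℝ^{qn×p} satisfying [1_q^T/√q ⊗ I_n]𝐁 = 0, and D ∈ ℝ^{q×(q-1)} an orthonormal basis of the orthogonal complement of 1_q, define the reduced pair 𝐀_r = I_{q-1} ⊗ A and 𝐁_r = [D^T ⊗ I_n]𝐁. Then the pair (𝐀_r, 𝐁_r) is controllable if and only if range 𝐖 ⊇ S_n^⊥, where 𝐖 = [𝐁 𝐀𝐁 ⋯ 𝐀^{n-1}𝐁] and S_n = range(1_q ⊗ I_n). -/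
open Matrix Kronecker

/-! Complete the rows of `Dᵀ ⊗ I` by those of `Sᵀ ⊗ I` to an orthogonal matrix, `S = 1_q/√q`.
Both `Dᵀ ⊗ I` and `Sᵀ ⊗ I` intertwine `I_q ⊗ A` with `I ⊗ A`, so they can be pulled through the
controllability matrix: `𝐖_r = (Dᵀ ⊗ I) 𝐖`, and `(Sᵀ ⊗ I) 𝐖 = 0` because `(Sᵀ ⊗ I) 𝐁 = 0`.
Hence `range 𝐖 ⊆ ker (Sᵀ ⊗ I) = S_n^⊥`, on which `Dᵀ ⊗ I` is invertible with inverse `D ⊗ I`;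
so `𝐖_r` is onto exactly when `range 𝐖` fills `S_n^⊥`. -/

namespace Matrix

variable {R ι κ υ J : Type*} [Fintype ι] [Fintype κ] [Fintype υ]

theorem surjective_mul_mulVec_iff_of_orthonormal_rows [Semiring R] [Fintype J]
    [DecidableEq ι] [DecidableEq κ] {P : Matrix κ ι R} {Q : Matrix υ ι R} (W : Matrix ι J R)
    (hP : P * Pᵀ = 1) (hPQ : Pᵀ * P + Qᵀ * Q = 1) (hQP : Q * Pᵀ = 0) (hQW : Q * W = 0) :
    Function.Surjective (P * W).mulVec ↔ ∀ x, Q *ᵥ x = 0 → ∃ α, W *ᵥ α = x := by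
  have hproj : ∀ x, Q *ᵥ x = 0 → Pᵀ *ᵥ (P *ᵥ x) = x := fun x hx => by
    rw [mulVec_mulVec, ← add_zero ((Pᵀ * P) *ᵥ x), ← mulVec_zero Qᵀ, ← hx, mulVec_mulVec,
      ← add_mulVec, hPQ, one_mulVec]
  constructor
  · intro hsurj x hx
    obtain ⟨α, hα⟩ := hsurj (P *ᵥ x)
    have hWα : Q *ᵥ (W *ᵥ α) = 0 := by rw [mulVec_mulVec, hQW, zero_mulVec]
    refine ⟨α, ?_⟩
    rw [← hproj _ hWα, mulVec_mulVec α P W, hα, hproj x hx]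
  · intro h z
    obtain ⟨α, hα⟩ := h (Pᵀ *ᵥ z) (by rw [mulVec_mulVec, hQP, zero_mulVec])
    exact ⟨α, by rw [← mulVec_mulVec, hα, mulVec_mulVec, hP, one_mulVec]⟩

theorem mul_transpose_add_mul_transpose_eq_one [CommRing R] [DecidableEq ι] [DecidableEq κ]
    [DecidableEq υ] (e : ι ≃ κ ⊕ υ) {D : Matrix ι κ R} {S : Matrix ι υ R}
    (hD : Dᵀ * D = 1) (hS : Sᵀ * S = 1) (hSD : Sᵀ * D = 0) :
    D * Dᵀ + S * Sᵀ = 1 := by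
  have hDS : Dᵀ * S = 0 := by
    rw [← transpose_transpose S, ← transpose_mul, hSD, transpose_zero]
  rw [← fromCols_mul_fromRows, fromCols_mul_fromRows_eq_one_comm e, fromRows_mul_fromCols,
    hD, hS, hDS, hSD, fromBlocks_one]

section KroneckerOne

variable {l m n : Type*} [CommSemiring R] [DecidableEq n]

theorem kronecker_one_mul_one_kronecker [Fintype l] [Fintype m] [Fintype n] [DecidableEq l]
    [DecidableEq m] (C : Matrix l m R) (A : Matrix n n R) :
    (C ⊗ₖ (1 : Matrix n n R)) * ((1 : Matrix m m R) ⊗ₖ A) =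
      ((1 : Matrix l l R) ⊗ₖ A) * (C ⊗ₖ (1 : Matrix n n R)) := by
  rw [← mul_kronecker_mul, ← mul_kronecker_mul, Matrix.mul_one, Matrix.one_mul, Matrix.one_mul,
    Matrix.mul_one]

theorem kronecker_one_mul_kronecker_one_transpose {l' : Type*} [Fintype m] [Fintype n]
    (C : Matrix l m R) (C' : Matrix l' m R) :
    (C ⊗ₖ (1 : Matrix n n R)) * (C' ⊗ₖ (1 : Matrix n n R))ᵀ = (C * C'ᵀ) ⊗ₖ 1 := by
  rw [← kroneckerMap_transpose, transpose_one, ← mul_kronecker_mul, Matrix.mul_one]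

theorem kronecker_one_transpose_mul_kronecker_one {m' : Type*} [Fintype l] [Fintype n]
    (C : Matrix l m R) (C' : Matrix l m' R) :
    (C ⊗ₖ (1 : Matrix n n R))ᵀ * (C' ⊗ₖ (1 : Matrix n n R)) = (Cᵀ * C') ⊗ₖ 1 := by
  rw [← kroneckerMap_transpose, transpose_one, ← mul_kronecker_mul, Matrix.mul_one]

theorem kronecker_one_mulVec_apply [Fintype m] [Fintype n] (C : Matrix l m R) (x : m × n → R)
    (u : l) (j : n) : ((C ⊗ₖ (1 : Matrix n n R)) *ᵥ x) (u, j) = ∑ i, C u i * x (i, j) := by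
  simp [mulVec, dotProduct, kroneckerMap_apply, one_apply, Fintype.sum_prod_type]

end KroneckerOne

end Matrix

theorem ctrb_mul_of_mul_eq_mul {ι ι' J : Type*} [Fintype ι] [Fintype ι'] [DecidableEq ι]
    [DecidableEq ι'] {M : Matrix ι ι ℝ} {M' : Matrix ι' ι' ℝ} {C : Matrix ι' ι ℝ}
    (hC : C * M = M' * C) (B : Matrix ι J ℝ) (N : ℕ) :
    ctrb M' (C * B) N = C * ctrb M B N := by
  have hpow : ∀ k : ℕ, M' ^ k * C = C * M ^ k := by
    intro k
    induction k with
    | zero => rw [pow_zero, pow_zero, Matrix.one_mul, Matrix.mul_one]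
    | succ k ih => rw [pow_succ, pow_succ, Matrix.mul_assoc, ← hC, ← Matrix.mul_assoc, ih,
        Matrix.mul_assoc]
  ext x ⟨r, σ⟩
  change (M' ^ (r : ℕ) * (C * B)) x σ = (C * ctrb M B N) x (r, σ)
  rw [← Matrix.mul_assoc, hpow, Matrix.mul_assoc]
  simp only [mul_apply, ctrb, of_apply]

theorem ctrb_zero {ι J : Type*} [Fintype ι] [DecidableEq ι] (M : Matrix ι ι ℝ) (N : ℕ) :
    ctrb M (0 : Matrix ι J ℝ) N = 0 := by
  ext x ⟨r, σ⟩
  simp [ctrb]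

noncomputable def normalizedOnes (q : ℕ) : Matrix (Fin q) Unit ℝ := of fun _ _ => (√q)⁻¹

section normalizedOnes

variable {q : ℕ}

theorem normalizedOnes_transpose_mul_self (hq : 0 < q) :
    (normalizedOnes q)ᵀ * normalizedOnes q = 1 := by
  have hq' : (0 : ℝ) < q := by exact_mod_cast hq
  ext
  simp [normalizedOnes, mul_apply, ← mul_inv, Real.mul_self_sqrt hq'.le, hq'.ne']

theorem normalizedOnes_transpose_mul {κ : Type*} {D : Matrix (Fin q) κ ℝ}
    (hD : ∀ c, ∑ i, D i c = 0) : (normalizedOnes q)ᵀ * D = 0 := by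
  ext u c
  simp [normalizedOnes, mul_apply, ← Finset.mul_sum, hD]

theorem normalizedOnes_transpose_kronecker_mulVec_eq_zero_iff {κ : Type*} [Fintype κ]
    [DecidableEq κ] (hq : 0 < q) (x : Fin q × κ → ℝ) :
    ((normalizedOnes q)ᵀ ⊗ₖ (1 : Matrix κ κ ℝ)) *ᵥ x = 0 ↔ ∀ j, ∑ i, x (i, j) = 0 := by
  have hs : (√(q : ℝ))⁻¹ ≠ 0 := by positivity
  simp only [funext_iff, Prod.forall, forall_const, kronecker_one_mulVec_apply, normalizedOnes,
    transpose_apply, of_apply, ← Finset.mul_sum, Pi.zero_apply, mul_eq_zero, hs, false_or]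

end normalizedOnes

theorem forall_sum_mul_eq_zero_iff_sum_eq_zero {R ι κ : Type*} [CommSemiring R] [Fintype ι]
    [Fintype κ] [DecidableEq κ] (x : ι × κ → R) :
    (∀ y : ι × κ → R, (∃ w : κ → R, ∀ i j, y (i, j) = w j) → ∑ z, x z * y z = 0) ↔
      ∀ j, ∑ i, x (i, j) = 0 := by
  constructor
  · intro h j
    simpa [Fintype.sum_prod_type, Finset.sum_comm (γ := ι)] using
      h (fun z => if z.2 = j then 1 else 0) ⟨fun j' => if j' = j then 1 else 0, fun _ _ => rfl⟩
  · rintro h y ⟨w, hw⟩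
    simp only [Fintype.sum_prod_type_right, hw, ← Finset.sum_mul, h, zero_mul,
      Finset.sum_const_zero]

/-- with `𝐀 = I_q ⊗ A`, `𝐁` of class 𝒢ₙ (zero block-column sums, i.e.
`[Sᵀ ⊗ I_n]𝐁 = 0` with `S = 1_q/√q`), and `D` an orthonormal basis of `1_q^⊥`, the reduced
pair `(𝐀_r, 𝐁_r) = (I_{q-1} ⊗ A, [Dᵀ ⊗ I_n]𝐁)` is controllable iff
`range 𝐖 ⊇ S_n^⊥`. -/
theorem stmt6 (n q p : ℕ) (hq : 2 ≤ q)
    (A : Matrix (Fin n) (Fin n) ℝ)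
    (B : Matrix (Fin q × Fin n) (Fin p) ℝ)
    (hB : ∀ σ (j : Fin n), ∑ i : Fin q, B (i, j) σ = 0)
    (D : Matrix (Fin q) (Fin (q - 1)) ℝ)
    (hD1 : Dᵀ * D = 1)
    (hD2 : ∀ c, ∑ i : Fin q, D i c = 0) :
    Function.Surjective
      (ctrb ((1 : Matrix (Fin (q - 1)) (Fin (q - 1)) ℝ) ⊗ₖ A)
        ((Dᵀ ⊗ₖ (1 : Matrix (Fin n) (Fin n) ℝ)) * B) n).mulVec ↔
    (∀ x : Fin q × Fin n → ℝ,
      (∀ y : Fin q × Fin n → ℝ, (∃ w : Fin n → ℝ, ∀ i j, y (i, j) = w j) →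
        ∑ z : Fin q × Fin n, x z * y z = 0) →
      ∃ α : Fin n × Fin p → ℝ,
        (ctrb ((1 : Matrix (Fin q) (Fin q) ℝ) ⊗ₖ A) B n).mulVec α = x) := by
  have hq0 : 0 < q := by omega
  have hSD := normalizedOnes_transpose_mul hD2
  have hDS : D * Dᵀ + normalizedOnes q * (normalizedOnes q)ᵀ = 1 :=
    mul_transpose_add_mul_transpose_eq_one (Fintype.equivOfCardEq (by simp; omega))
      hD1 (normalizedOnes_transpose_mul_self hq0) hSD
  have hSB : ((normalizedOnes q)ᵀ ⊗ₖ (1 : Matrix (Fin n) (Fin n) ℝ)) * B = 0 := by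
    ext ⟨u, j⟩ σ
    exact congrFun ((normalizedOnes_transpose_kronecker_mulVec_eq_zero_iff hq0 _).mpr (hB σ))
      (u, j)
  rw [ctrb_mul_of_mul_eq_mul (kronecker_one_mul_one_kronecker Dᵀ A),
    surjective_mul_mulVec_iff_of_orthonormal_rows
      (Q := (normalizedOnes q)ᵀ ⊗ₖ (1 : Matrix (Fin n) (Fin n) ℝ))]
  · refine forall_congr' fun x => ?_
    rw [forall_sum_mul_eq_zero_iff_sum_eq_zero,
      normalizedOnes_transpose_kronecker_mulVec_eq_zero_iff hq0]
  · rw [kronecker_one_mul_kronecker_one_transpose, transpose_transpose, hD1, one_kronecker_one]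
  · rw [kronecker_one_transpose_mul_kronecker_one, kronecker_one_transpose_mul_kronecker_one,
      transpose_transpose, transpose_transpose, ← add_kronecker, hDS, one_kronecker_one]
  · rw [kronecker_one_mul_kronecker_one_transpose, transpose_transpose, hSD, zero_kronecker]
  · rw [← ctrb_mul_of_mul_eq_mul (kronecker_one_mul_one_kronecker _ A), hSB, ctrb_zero]
end

section
/- Let A ∈ ℝ^{n×n} and let μ_1,...,μ_m be the distinct eigenvalues of A* with V_κ a full-column-rank matrix whose columns span null(A* − μ_κ I_n). For an array 𝐀 = I_q ⊗ A, 𝐁 ∈ ℂ^{qn×p} with [1_q^T ⊗ I_n]𝐁 = 0 and 𝐖 = [𝐁 𝐀𝐁 ⋯ 𝐀^{n-1}𝐁], the following are equivalent: (i) range 𝐖 ⊇ S_n^⊥; (ii) for every κ = 1,...,m, range([I_q ⊗ V_κ*]𝐁) ⊇ S_{d_κ}^⊥, where d_κ is the geometric multiplicity of μ_κ. -/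
/-!
Both conditions are first dualized: `range M ⊇ S^⊥` iff `ker Mᴴ ⊆ S`. By Cayley–Hamilton,
`ker 𝐖ᴴ` is the largest `(I ⊗ Aᴴ)`-invariant subspace of `ker 𝐁ᴴ`, so (i) says that this
subspace lies in `S_n`. As `𝐁ᴴ` kills `S_n` and `S_n^⊥ = ker (1_qᵀ ⊗ I_n)` is an invariant
complement of `S_n`, this holds iff every eigenvector of `I ⊗ Aᴴ` in `ker 𝐁ᴴ` lies in `S_n`
(over `ℂ`, an invariant subspace without eigenvectors is zero). The blocks of such an
eigenvector lie in a common eigenspace `range V_κ`, so it is `(I ⊗ V_κ) z` with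
`𝐁ᴴ (I ⊗ V_κ) z = 0`, and injectivity of `V_κ` gives `z ∈ S_{d_κ} ↔ (I ⊗ V_κ) z ∈ S_n`:
this is (ii), dualized.
-/

open Matrix Kronecker

/-- Controllability matrix `[B  MB  ⋯  M^{N-1}B]` over ℂ. -/
noncomputable def ctrbC {ι J : Type*} [Fintype ι] [DecidableEq ι]
    (M : Matrix ι ι ℂ) (B : Matrix ι J ℂ) (N : ℕ) : Matrix ι (Fin N × J) ℂ :=
  Matrix.of fun x rσ => ((M ^ (rσ.1 : ℕ)) * B) x rσ.2

theorem Module.End.eq_bot_of_forall_eigenvector_eq_zero {K V : Type*} [Field K] [IsAlgClosed K]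
    [AddCommGroup V] [Module K V] [FiniteDimensional K V] {f : Module.End K V}
    {W : Submodule K V} (hW : ∀ v ∈ W, f v ∈ W) (h : ∀ (c : K), ∀ v ∈ W, f v = c • v → v = 0) :
    W = ⊥ := by
  by_contra hne
  have : Nontrivial W := Submodule.nontrivial_iff_ne_bot.mpr hne
  obtain ⟨c, hc⟩ := Module.End.exists_eigenvalue (f.restrict hW)
  obtain ⟨⟨v, hvW⟩, hv⟩ := hc.exists_hasEigenvector
  have hfv : f v = c • v := congrArg Subtype.val hv.apply_eq_smul
  exact hv.2 (Subtype.ext (h c v hvW hfv))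

namespace Matrix

section Fredholm

variable {𝕜 : Type*} [RCLike 𝕜] {ι J : Type*} [Fintype ι] [Fintype J]

theorem orthogonal_le_range_iff_ker_conjTranspose_le (M : Matrix ι J 𝕜)
    (S : Submodule 𝕜 (ι → 𝕜)) :
    (∀ x, (∀ y ∈ S, star y ⬝ᵥ x = 0) → ∃ α, M *ᵥ α = x) ↔ ∀ z, Mᴴ *ᵥ z = 0 → z ∈ S := by
  classical
  let S' := S.comap (WithLp.linearEquiv 2 𝕜 (ι → 𝕜)).toLinearMap
  let R := LinearMap.range M.toEuclideanLin
  have hS' (x : ι → 𝕜) : WithLp.toLp 2 x ∈ S'ᗮ ↔ ∀ y ∈ S, star y ⬝ᵥ x = 0 := by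
    simp [S', Submodule.mem_orthogonal, EuclideanSpace.inner_eq_star_dotProduct, dotProduct_comm,
      (WithLp.toLp_surjective 2).forall]
  have hR (z : ι → 𝕜) : WithLp.toLp 2 z ∈ Rᗮ ↔ Mᴴ *ᵥ z = 0 := by
    simp [R, LinearMap.orthogonal_range, ← toEuclideanLin_conjTranspose_eq_adjoint]
  have hRm (x : ι → 𝕜) : WithLp.toLp 2 x ∈ R ↔ ∃ α, M *ᵥ α = x := by
    simp [R, (WithLp.toLp_surjective 2).exists]
  have key := Submodule.orthogonal_le_iff_orthogonal_le (K₀ := S') (K₁ := R)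
  simp only [SetLike.le_def, (WithLp.toLp_surjective 2).forall] at key
  simpa [hS', hR, hRm, S'] using key

end Fredholm

section CayleyHamilton

variable {R η : Type*} [CommRing R] [Fintype η] [DecidableEq η]

theorem exists_pow_eq_sum_smul_pow_lt_card [Nontrivial R] (M : Matrix η η R) (k : ℕ) :
    ∃ c : ℕ → R, M ^ k = ∑ i ∈ Finset.range (Fintype.card η), c i • M ^ i := by
  rcases isEmpty_or_nonempty η with hη | hη
  · exact ⟨0, Subsingleton.elim _ _⟩
  have hχ : M.charpoly ≠ 1 := fun h => by
    simpa [h, eq_comm] using M.charpoly_natDegree_eq_dim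
  refine ⟨fun i => (Polynomial.X ^ k %ₘ M.charpoly).coeff i, ?_⟩
  rw [pow_eq_aeval_mod_charpoly, Polynomial.aeval_eq_sum_range']
  simpa using Polynomial.natDegree_modByMonic_lt _ M.charpoly_monic hχ

theorem pow_mulVec_of_mulVec_eq_smul {M : Matrix η η R} {v : η → R} {c : R}
    (h : M *ᵥ v = c • v) (k : ℕ) : (M ^ k) *ᵥ v = c ^ k • v := by
  induction k with
  | zero => simp
  | succ k ih => rw [pow_succ', ← mulVec_mulVec, ih, mulVec_smul, h, smul_smul, pow_succ]

end CayleyHamilton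

section Blocks

variable (R : Type*) {ι η δ : Type*}

/-- The paper's `S_r = range (1_q ⊗ I_r)`. -/
def blockConst [Semiring R] : Submodule R (ι × η → R) where
  carrier := {y | ∃ w : η → R, ∀ i j, y (i, j) = w j}
  add_mem' := by
    rintro _ _ ⟨w, hw⟩ ⟨w', hw'⟩
    exact ⟨w + w', fun i j => by simp [hw, hw']⟩
  zero_mem' := ⟨0, fun _ _ => rfl⟩
  smul_mem' := by
    rintro c _ ⟨w, hw⟩
    exact ⟨c • w, fun i j => by simp [hw]⟩

/-- The map `1_qᵀ ⊗ I_r`. -/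
def blockSum [CommSemiring R] [Fintype ι] : (ι × η → R) →ₗ[R] (η → R) where
  toFun v j := ∑ i, v (i, j)
  map_add' _ _ := by ext; simp [Finset.sum_add_distrib]
  map_smul' _ _ := by ext; simp [Finset.mul_sum]

variable {R}

@[simp]
theorem blockSum_apply [CommSemiring R] [Fintype ι] (v : ι × η → R) (j : η) :
    blockSum R v j = ∑ i, v (i, j) := rfl

theorem blockConst_inf_ker_blockSum [Fintype ι] [Field R] [CharZero R] [Nonempty ι] :
    blockConst R ⊓ LinearMap.ker (blockSum R) = (⊥ : Submodule R (ι × η → R)) := by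
  refine (Submodule.eq_bot_iff _).mpr fun v ⟨⟨w, hw⟩, hv⟩ => ?_
  have hw0 : w = 0 := by
    ext j
    have := congrFun (LinearMap.mem_ker.mp hv) j
    simpa [hw] using this
  ext ⟨i, j⟩
  simp [hw, hw0]

theorem exists_mem_blockConst_sub_mem_ker_blockSum [Fintype ι] [Field R] [CharZero R]
    [Nonempty ι] (z : ι × η → R) : ∃ m ∈ blockConst R, z - m ∈ LinearMap.ker (blockSum R) := by
  let w : η → R := fun j => (Fintype.card ι : R)⁻¹ * blockSum R z j
  refine ⟨fun p => w p.2, ⟨w, fun _ _ => rfl⟩, ?_⟩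
  ext j
  simp [w, Finset.sum_sub_distrib]

theorem blockConst_le_ker_conjTranspose [Fintype ι] [Fintype η] [CommSemiring R] [StarRing R]
    {P : Type*} {B : Matrix (ι × η) P R}
    (hB : ∀ σ j, ∑ i, B (i, j) σ = 0) : blockConst R ≤ LinearMap.ker Bᴴ.mulVecLin := by
  rintro v ⟨w, hw⟩
  ext σ
  simp only [mulVecLin_apply, mulVec, dotProduct, conjTranspose_apply,
    Fintype.sum_prod_type, hw, Pi.zero_apply]
  rw [Finset.sum_comm]
  refine Finset.sum_eq_zero fun j _ => ?_
  rw [← Finset.sum_mul, ← star_sum, hB σ j, star_zero, zero_mul]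

variable [Fintype ι] [DecidableEq ι] [Fintype δ]

theorem one_kronecker_mulVec_apply [NonAssocSemiring R] (M : Matrix η δ R) (z : ι × δ → R)
    (i : ι) (j : η) : (((1 : Matrix ι ι R) ⊗ₖ M) *ᵥ z) (i, j) = (M *ᵥ Function.curry z i) j := by
  simp only [mulVec, dotProduct, Fintype.sum_prod_type, kroneckerMap_apply, one_apply]
  rw [Finset.sum_eq_single i] <;> simp +contextual [eq_comm]

theorem curry_one_kronecker_mulVec [NonAssocSemiring R] (M : Matrix η δ R) (z : ι × δ → R)
    (i : ι) : Function.curry (((1 : Matrix ι ι R) ⊗ₖ M) *ᵥ z) i = M *ᵥ Function.curry z i :=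
  funext (one_kronecker_mulVec_apply M z i)

theorem one_kronecker_pow [CommSemiring R] [DecidableEq η] [Fintype η] (M : Matrix η η R)
    (k : ℕ) : ((1 : Matrix ι ι R) ⊗ₖ M) ^ k = 1 ⊗ₖ (M ^ k) := by
  induction k with
  | zero => simp
  | succ k ih => rw [pow_succ, pow_succ, ih, ← mul_kronecker_mul, one_mul]

theorem one_kronecker_mulVec_eq_smul_iff [NonAssocSemiring R] [Fintype η] {M : Matrix η η R}
    {v : ι × η → R} {c : R} :
    ((1 : Matrix ι ι R) ⊗ₖ M) *ᵥ v = c • v ↔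
      ∀ i, M *ᵥ Function.curry v i = c • Function.curry v i := by
  simp only [funext_iff, Prod.forall, one_kronecker_mulVec_apply, Pi.smul_apply,
    Function.curry_apply]

theorem one_kronecker_mulVec_mem_blockConst [Semiring R] (M : Matrix η δ R) {z : ι × δ → R}
    (hz : z ∈ blockConst R) : ((1 : Matrix ι ι R) ⊗ₖ M) *ᵥ z ∈ blockConst R := by
  obtain ⟨w, hw⟩ := hz
  refine ⟨M *ᵥ w, fun i j => ?_⟩
  rw [one_kronecker_mulVec_apply]
  congr 2
  ext l
  exact hw i l

theorem mem_blockConst_of_one_kronecker_mulVec_mem [Semiring R] {M : Matrix η δ R}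
    (hM : Function.Injective M.mulVec) {z : ι × δ → R}
    (hz : ((1 : Matrix ι ι R) ⊗ₖ M) *ᵥ z ∈ blockConst R) : z ∈ blockConst R := by
  rcases isEmpty_or_nonempty ι with hι | ⟨⟨i₀⟩⟩
  · exact ⟨0, fun i => isEmptyElim i⟩
  obtain ⟨w, hw⟩ := hz
  have hrow (i : ι) : M *ᵥ Function.curry z i = w := by
    ext j; rw [← one_kronecker_mulVec_apply, hw]
  exact ⟨Function.curry z i₀, fun i j => congrFun (hM ((hrow i).trans (hrow i₀).symm)) j⟩

theorem blockSum_one_kronecker_mulVec [CommSemiring R] [Fintype η] (M : Matrix η η R)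
    (v : ι × η → R) : blockSum R (((1 : Matrix ι ι R) ⊗ₖ M) *ᵥ v) = M *ᵥ blockSum R v := by
  ext j
  simp only [blockSum_apply, one_kronecker_mulVec_apply]
  simp only [mulVec, dotProduct, blockSum_apply, Finset.mul_sum, Function.curry_apply]
  exact Finset.sum_comm

end Blocks

section Unobservable

variable {R ι P : Type*} [CommRing R] [Fintype ι] [DecidableEq ι]

def unobservableSubspace (C : Matrix P ι R) (T : Matrix ι ι R) : Submodule R (ι → R) :=
  ⨅ k : ℕ, LinearMap.ker (C * T ^ k).mulVecLin

theorem mem_unobservableSubspace {C : Matrix P ι R} {T : Matrix ι ι R} {v : ι → R} :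
    v ∈ unobservableSubspace C T ↔ ∀ k : ℕ, C *ᵥ (T ^ k *ᵥ v) = 0 := by
  simp [unobservableSubspace, mulVec_mulVec]

theorem mulVec_mem_unobservableSubspace {C : Matrix P ι R} {T : Matrix ι ι R} {v : ι → R}
    (hv : v ∈ unobservableSubspace C T) : T *ᵥ v ∈ unobservableSubspace C T := by
  rw [mem_unobservableSubspace] at hv ⊢
  intro k
  rw [mulVec_mulVec _ (T ^ k), ← pow_succ, hv]

end Unobservable

section Array

variable {K ι η P : Type*} [Fintype ι] [DecidableEq ι] [Fintype η]

theorem unobservableSubspace_le_blockConst_iff [DecidableEq η] [Field K] [IsAlgClosed K]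
    [CharZero K] [Nonempty ι] {G : Matrix η η K} {C : Matrix P (ι × η) K}
    (hC : blockConst K ≤ LinearMap.ker C.mulVecLin) :
    unobservableSubspace C (1 ⊗ₖ G) ≤ blockConst K ↔
      ∀ (c : K) v, (1 ⊗ₖ G) *ᵥ v = c • v → C *ᵥ v = 0 → v ∈ blockConst K := by
  set T : Matrix (ι × η) (ι × η) K := 1 ⊗ₖ G
  constructor
  · intro h c v hv hCv
    refine h (mem_unobservableSubspace.mpr fun k => ?_)
    rw [pow_mulVec_of_mulVec_eq_smul hv, mulVec_smul, hCv, smul_zero]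
  intro h
  have hS : blockConst K ≤ unobservableSubspace C T := fun v hv =>
    mem_unobservableSubspace.mpr fun k => by
      rw [one_kronecker_pow]
      exact hC (one_kronecker_mulVec_mem_blockConst _ hv)
  have hW : unobservableSubspace C T ⊓ LinearMap.ker (blockSum K) = ⊥ := by
    refine Module.End.eq_bot_of_forall_eigenvector_eq_zero (f := T.mulVecLin) ?_ ?_
    · intro v hv
      obtain ⟨hvU, hvS⟩ := Submodule.mem_inf.mp hv
      refine Submodule.mem_inf.mpr ⟨mulVec_mem_unobservableSubspace hvU, ?_⟩
      rw [LinearMap.mem_ker] at hvS ⊢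
      rw [mulVecLin_apply, blockSum_one_kronecker_mulVec, hvS, mulVec_zero]
    · intro c v hv hTv
      obtain ⟨hvU, hvS⟩ := Submodule.mem_inf.mp hv
      have hCv : C *ᵥ v = 0 := by simpa using mem_unobservableSubspace.mp hvU 0
      have : v ∈ blockConst K ⊓ LinearMap.ker (blockSum K) := ⟨h c v hTv hCv, hvS⟩
      rwa [blockConst_inf_ker_blockSum] at this
  intro z hz
  obtain ⟨m, hm, hzm⟩ := exists_mem_blockConst_sub_mem_ker_blockSum z
  have : z - m ∈ unobservableSubspace C T ⊓ LinearMap.ker (blockSum K) :=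
    ⟨sub_mem hz (hS hm), hzm⟩
  rw [hW, Submodule.mem_bot, sub_eq_zero] at this
  exact this ▸ hm

theorem forall_eigenvector_mem_blockConst_iff [CommRing K] {m : Type*} {δ : m → Type*}
    [∀ κ, Fintype (δ κ)] {G : Matrix η η K} {C : Matrix P (ι × η) K} {μ : m → K}
    {V : ∀ κ, Matrix η (δ κ) K} (hVrank : ∀ κ, Function.Injective (V κ).mulVec)
    (hVrange : ∀ κ x, (∃ y, V κ *ᵥ y = x) ↔ G *ᵥ x = μ κ • x)
    (heig : ∀ (c : K) x, x ≠ 0 → G *ᵥ x = c • x → ∃ κ, μ κ = c) :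
    (∀ (c : K) v, ((1 : Matrix ι ι K) ⊗ₖ G) *ᵥ v = c • v → C *ᵥ v = 0 → v ∈ blockConst K) ↔
      ∀ κ z, C *ᵥ (((1 : Matrix ι ι K) ⊗ₖ V κ) *ᵥ z) = 0 → z ∈ blockConst K := by
  constructor
  · intro h κ z hz
    refine mem_blockConst_of_one_kronecker_mulVec_mem (hVrank κ) (h (μ κ) _ ?_ hz)
    refine one_kronecker_mulVec_eq_smul_iff.mpr fun i =>
      (hVrange κ _).mp ⟨Function.curry z i, (curry_one_kronecker_mulVec _ z i).symm⟩
  intro h c v hv hCv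
  by_cases hv0 : v = 0
  · exact hv0 ▸ zero_mem _
  obtain ⟨i₀, hi₀⟩ : ∃ i, Function.curry v i ≠ 0 := by
    by_contra! hall
    exact hv0 (funext fun p => congrFun (hall p.1) p.2)
  have hblock := one_kronecker_mulVec_eq_smul_iff.mp hv
  obtain ⟨κ, rfl⟩ := heig c _ hi₀ (hblock i₀)
  choose y hy using fun i => (hVrange κ _).mpr (hblock i)
  have hvy : v = ((1 : Matrix ι ι K) ⊗ₖ V κ) *ᵥ Function.uncurry y := by
    ext ⟨i, j⟩
    rw [one_kronecker_mulVec_apply, Function.curry_uncurry, hy]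
    rfl
  rw [hvy] at hCv ⊢
  exact one_kronecker_mulVec_mem_blockConst _ (h κ _ hCv)

end Array

end Matrix

section Controllability

variable {ι η J : Type*} [Fintype ι] [DecidableEq ι] [Fintype η] [DecidableEq η]

theorem ctrbC_conjTranspose_mulVec_eq_zero_iff (M : Matrix ι ι ℂ) (B : Matrix ι J ℂ) (N : ℕ)
    (z : ι → ℂ) : (ctrbC M B N)ᴴ *ᵥ z = 0 ↔ ∀ k < N, Bᴴ *ᵥ (Mᴴ ^ k *ᵥ z) = 0 := by
  have hentry (k : Fin N) (σ : J) :
      ((ctrbC M B N)ᴴ *ᵥ z) (k, σ) = (Bᴴ *ᵥ (Mᴴ ^ (k : ℕ) *ᵥ z)) σ := by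
    rw [mulVec_mulVec, ← conjTranspose_pow, ← conjTranspose_mul]
    simp [ctrbC, mulVec, dotProduct, conjTranspose_apply]
  simp only [funext_iff, Prod.forall, hentry, Pi.zero_apply]
  exact ⟨fun h k hk => h ⟨k, hk⟩, fun h k => h k k.2⟩

theorem ctrbC_one_kronecker_conjTranspose_mulVec_eq_zero_iff (A : Matrix η η ℂ)
    (B : Matrix (ι × η) J ℂ) {N : ℕ} (hN : Fintype.card η ≤ N) (z : ι × η → ℂ) :
    (ctrbC (1 ⊗ₖ A) B N)ᴴ *ᵥ z = 0 ↔ z ∈ unobservableSubspace Bᴴ (1 ⊗ₖ Aᴴ) := by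
  rw [ctrbC_conjTranspose_mulVec_eq_zero_iff, mem_unobservableSubspace, conjTranspose_kronecker,
    conjTranspose_one]
  refine ⟨fun h k => ?_, fun h k _ => h k⟩
  obtain ⟨c, hc⟩ := exists_pow_eq_sum_smul_pow_lt_card Aᴴ k
  have hlin (M : Matrix η η ℂ) : (1 : Matrix ι ι ℂ) ⊗ₖ M = kroneckerBilinear (R := ℂ) 1 M := rfl
  rw [one_kronecker_pow, hc, hlin, map_sum]
  simp only [map_smul, sum_mulVec, mulVec_sum, smul_mulVec, mulVec_smul]
  refine Finset.sum_eq_zero fun i hi => ?_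
  rw [← hlin, ← one_kronecker_pow, h i (by simp at hi; omega), smul_zero]

end Controllability

theorem stmt7_general (n q p m : ℕ) (hq : 2 ≤ q)
    (A : Matrix (Fin n) (Fin n) ℝ)
    (μ : Fin m → ℂ)
    (d : Fin m → ℕ)
    (V : ∀ κ : Fin m, Matrix (Fin n) (Fin (d κ)) ℂ)
    (hVrank : ∀ κ, Function.Injective (V κ).mulVec)
    (hVrange : ∀ κ (x : Fin n → ℂ),
      (∃ y, (V κ).mulVec y = x) ↔ ((A.map (Complex.ofReal))ᴴ).mulVec x = μ κ • x)
    (heig : ∀ (c : ℂ) (x : Fin n → ℂ), x ≠ 0 →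
      ((A.map (Complex.ofReal))ᴴ).mulVec x = c • x → ∃ κ, μ κ = c)
    (B : Matrix (Fin q × Fin n) (Fin p) ℂ)
    (hB : ∀ σ (j : Fin n), ∑ i : Fin q, B (i, j) σ = 0) :
    (∀ x : Fin q × Fin n → ℂ,
      (∀ y : Fin q × Fin n → ℂ, (∃ w : Fin n → ℂ, ∀ i j, y (i, j) = w j) →
        ∑ z : Fin q × Fin n, star (y z) * x z = 0) →
      ∃ α : Fin n × Fin p → ℂ,
        (ctrbC ((1 : Matrix (Fin q) (Fin q) ℂ) ⊗ₖ (A.map (Complex.ofReal))) B n).mulVec α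
          = x) ↔
    (∀ κ : Fin m, ∀ x : Fin q × Fin (d κ) → ℂ,
      (∀ y : Fin q × Fin (d κ) → ℂ, (∃ w : Fin (d κ) → ℂ, ∀ i j, y (i, j) = w j) →
        ∑ z : Fin q × Fin (d κ), star (y z) * x z = 0) →
      ∃ α : Fin p → ℂ,
        (((1 : Matrix (Fin q) (Fin q) ℂ) ⊗ₖ (V κ)ᴴ) * B).mulVec α = x) := by
  have : Nonempty (Fin q) := ⟨⟨0, by omega⟩⟩
  have hproj (κ : Fin m) (z : Fin q × Fin (d κ) → ℂ) :
      (((1 : Matrix (Fin q) (Fin q) ℂ) ⊗ₖ (V κ)ᴴ) * B)ᴴ *ᵥ z =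
        Bᴴ *ᵥ (((1 : Matrix (Fin q) (Fin q) ℂ) ⊗ₖ V κ) *ᵥ z) := by
    rw [conjTranspose_mul, conjTranspose_kronecker, conjTranspose_one, conjTranspose_conjTranspose,
      mulVec_mulVec]
  calc _ ↔ ∀ z, (ctrbC ((1 : Matrix (Fin q) (Fin q) ℂ) ⊗ₖ A.map Complex.ofReal) B n)ᴴ *ᵥ z = 0 →
          z ∈ blockConst ℂ :=
        orthogonal_le_range_iff_ker_conjTranspose_le _ (blockConst ℂ)
    _ ↔ unobservableSubspace Bᴴ ((1 : Matrix (Fin q) (Fin q) ℂ) ⊗ₖ (A.map Complex.ofReal)ᴴ) ≤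
          blockConst ℂ := by
        simp only [ctrbC_one_kronecker_conjTranspose_mulVec_eq_zero_iff _ _ (Fintype.card_fin n).le]
        rfl
    _ ↔ _ := unobservableSubspace_le_blockConst_iff (blockConst_le_ker_conjTranspose hB)
    _ ↔ ∀ κ z, Bᴴ *ᵥ (((1 : Matrix (Fin q) (Fin q) ℂ) ⊗ₖ V κ) *ᵥ z) = 0 → z ∈ blockConst ℂ :=
        forall_eigenvector_mem_blockConst_iff hVrank hVrange heig
    _ ↔ _ := by
        simp only [← hproj]
        exact forall_congr' fun κ =>
          (orthogonal_le_range_iff_ker_conjTranspose_le _ (blockConst ℂ)).symm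

/-- PBH-type test, Theorem on controllability: with `μ_κ` the distinct
eigenvalues of `A*` and `V_κ` full-column-rank bases of the eigenspaces
`null(A* - μ_κ I)`, one has `range 𝐖 ⊇ S_n^⊥` iff
`range([I_q ⊗ V_κ*]𝐁) ⊇ S_{d_κ}^⊥` for every κ. -/
theorem stmt7 (n q p m : ℕ) (hq : 2 ≤ q)
    (A : Matrix (Fin n) (Fin n) ℝ)
    (μ : Fin m → ℂ) (hμ : Function.Injective μ)
    (d : Fin m → ℕ) (hd : ∀ κ, 0 < d κ)
    (V : ∀ κ : Fin m, Matrix (Fin n) (Fin (d κ)) ℂ)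
    (hVrank : ∀ κ, Function.Injective (V κ).mulVec)
    (hVrange : ∀ κ (x : Fin n → ℂ),
      (∃ y, (V κ).mulVec y = x) ↔ ((A.map (Complex.ofReal))ᴴ).mulVec x = μ κ • x)
    (heig : ∀ (c : ℂ) (x : Fin n → ℂ), x ≠ 0 →
      ((A.map (Complex.ofReal))ᴴ).mulVec x = c • x → ∃ κ, μ κ = c)
    (B : Matrix (Fin q × Fin n) (Fin p) ℂ)
    (hB : ∀ σ (j : Fin n), ∑ i : Fin q, B (i, j) σ = 0) :
    (∀ x : Fin q × Fin n → ℂ,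
      (∀ y : Fin q × Fin n → ℂ, (∃ w : Fin n → ℂ, ∀ i j, y (i, j) = w j) →
        ∑ z : Fin q × Fin n, star (y z) * x z = 0) →
      ∃ α : Fin n × Fin p → ℂ,
        (ctrbC ((1 : Matrix (Fin q) (Fin q) ℂ) ⊗ₖ (A.map (Complex.ofReal))) B n).mulVec α
          = x) ↔
    (∀ κ : Fin m, ∀ x : Fin q × Fin (d κ) → ℂ,
      (∀ y : Fin q × Fin (d κ) → ℂ, (∃ w : Fin (d κ) → ℂ, ∀ i j, y (i, j) = w j) →
        ∑ z : Fin q × Fin (d κ), star (y z) * x z = 0) →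
      ∃ α : Fin p → ℂ,
        (((1 : Matrix (Fin q) (Fin q) ℂ) ⊗ₖ (V κ)ᴴ) * B).mulVec α = x) :=
  stmt7_general n q p m hq A μ d V hVrank hVrange heig B hB
end

section
/- Let μ_κ be a real eigenvalue of A* with real eigenvector matrix V_κ ∈ ℝ^{n×d_κ} (full column rank, A* V_κ = μ_κ V_κ). Let 𝐁 ∈ ℝ^{qn×p} satisfy [1_q^T ⊗ I_n]𝐁 = 0, let D ∈ ℝ^{q×(q-1)} be an orthonormal basis of 1_q^⊥, and let 𝐁_r = [D^T ⊗ I_n]𝐁. Then cone([I_{q-1} ⊗ V_κ^T]𝐁_r) = ℝ^{(q-1)d_κ} if and only if cone([I_q ⊗ V_κ^T]𝐁) ⊇ S_{d_κ}^⊥. -/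
/-!
Every column of `[I_q ⊗ V_κᵀ]𝐁` has blockwise sum zero, so its cone lies in `S_{d_κ}^⊥`.
Since `DDᵀ + 1_q 1_qᵀ / q = I_q`, the maps `Dᵀ ⊗ I` and `D ⊗ I` are mutually inverse bijections
between `S_{d_κ}^⊥` and `ℝ^{(q-1)d_κ}`. As `[I_{q-1} ⊗ V_κᵀ]𝐁_r = (Dᵀ ⊗ I)[I_q ⊗ V_κᵀ]𝐁`, the
reduced cone is the image of the full cone under this bijection, so it is the whole space exactly
when the full cone contains `S_{d_κ}^⊥`.
-/

open Matrix Kronecker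

theorem Set.image_eq_univ_iff_subset_of_leftInverse {α β : Type*} {f : α → β} {g : β → α}
    {S C : Set α} (hfg : Function.LeftInverse f g) (hg : ∀ y, g y ∈ S)
    (hgf : ∀ x ∈ S, g (f x) = x) (hC : C ⊆ S) :
    f '' C = Set.univ ↔ S ⊆ C := by
  refine ⟨fun h x hx => ?_, fun h => Set.eq_univ_of_forall fun y => ⟨g y, h (hg y), hfg y⟩⟩
  obtain ⟨c, hc, hcx⟩ := h ▸ Set.mem_univ (f x)
  rw [← hgf x hx, ← hcx, hgf c (hC hc)]
  exact hc

def nonnegCone {m σ : Type*} [Fintype σ] (M : Matrix m σ ℝ) : Set (m → ℝ) :=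
  M.mulVec '' Set.Ici 0

theorem nonnegCone_mul {l m σ : Type*} [Fintype m] [Fintype σ] (P : Matrix l m ℝ)
    (M : Matrix m σ ℝ) : nonnegCone (P * M) = P.mulVec '' nonnegCone M := by
  simp only [nonnegCone, Set.image_image, mulVec_mulVec]

/-- The paper's `S_{d_κ}^⊥` when `ι = Fin q`, `κ = Fin d_κ`. -/
def blockSumZero (ι κ : Type*) [Fintype ι] (R : Type*) [AddCommMonoid R] : Set (ι × κ → R) :=
  {x | ∀ j, ∑ i, x (i, j) = 0}

theorem forall_sum_mul_blockConst_eq_zero_iff {ι κ : Type*} [Fintype ι] [Fintype κ]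
    {R : Type*} [Semiring R] (x : ι × κ → R) :
    (∀ y : ι × κ → R, (∃ w : κ → R, ∀ i j, y (i, j) = w j) → ∑ z, x z * y z = 0) ↔
      x ∈ blockSumZero ι κ R := by
  classical
  refine ⟨fun h j => ?_, fun h y ⟨w, hw⟩ => ?_⟩
  · simpa [Fintype.sum_prod_type, Pi.single_apply] using
      h (fun z : ι × κ => (Pi.single j 1 : κ → R) z.2) ⟨Pi.single j 1, fun _ _ => rfl⟩
  · simp only [Fintype.sum_prod_type_right, hw, ← Finset.sum_mul, h _, zero_mul,
      Finset.sum_const_zero]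

namespace Matrix

section Semiring

variable {ι ι' κ κ' σ R : Type*} [Fintype ι] [Semiring R]

theorem mulVec_mem_blockSumZero [Fintype σ] {B : Matrix (ι × κ) σ R}
    (hB : ∀ s, Bᵀ s ∈ blockSumZero ι κ R) (α : σ → R) : B *ᵥ α ∈ blockSumZero ι κ R := by
  intro j
  simp only [mulVec, dotProduct]
  rw [Finset.sum_comm]
  exact Finset.sum_eq_zero fun s _ => by
    rw [← Finset.sum_mul]
    exact mul_eq_zero_of_left (hB s j) _

theorem kronecker_one_mulVec_apply_s8 [Fintype κ] [DecidableEq κ] (A : Matrix ι' ι R)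
    (x : ι × κ → R) (c : ι') (j : κ) :
    ((A ⊗ₖ (1 : Matrix κ κ R)) *ᵥ x) (c, j) = (A *ᵥ fun i => x (i, j)) c := by
  simp [mulVec, dotProduct, Fintype.sum_prod_type, one_apply]

theorem one_kronecker_mulVec_apply_s8 [Fintype κ] [DecidableEq ι] (A : Matrix κ' κ R)
    (x : ι × κ → R) (i : ι) (j : κ') :
    (((1 : Matrix ι ι R) ⊗ₖ A) *ᵥ x) (i, j) = (A *ᵥ fun l => x (i, l)) j := by
  simp [mulVec, dotProduct, Fintype.sum_prod_type, one_apply]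

theorem kronecker_one_mulVec_mem_blockSumZero [Fintype ι'] [Fintype κ] [DecidableEq κ]
    {A : Matrix ι ι' R} (hA : ∀ c, ∑ i, A i c = 0) (x : ι' × κ → R) :
    (A ⊗ₖ (1 : Matrix κ κ R)) *ᵥ x ∈ blockSumZero ι κ R :=
  mulVec_mem_blockSumZero (fun ⟨c, l⟩ j => by
    show ∑ i, A i c * (1 : Matrix κ κ R) j l = 0
    rw [← Finset.sum_mul, hA, zero_mul]) x

theorem one_kronecker_mulVec_mem_blockSumZero [Fintype κ] [DecidableEq ι] (A : Matrix κ' κ R)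
    {x : ι × κ → R} (hx : x ∈ blockSumZero ι κ R) :
    ((1 : Matrix ι ι R) ⊗ₖ A) *ᵥ x ∈ blockSumZero ι κ' R := by
  have hblocks : ∑ i, (fun l => x (i, l)) = 0 := funext fun l => by simpa using hx l
  intro j
  calc ∑ i, (((1 : Matrix ι ι R) ⊗ₖ A) *ᵥ x) (i, j) = (A *ᵥ ∑ i, fun l => x (i, l)) j := by
        simp only [one_kronecker_mulVec_apply_s8, mulVec_sum, Finset.sum_apply]
    _ = 0 := by rw [hblocks, mulVec_zero, Pi.zero_apply]

end Semiring

section OrthonormalBasisOfOnesComplement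

variable {ι ι' κ : Type*} [Fintype ι] [Fintype ι'] [DecidableEq ι'] [Fintype κ] [DecidableEq κ]
  {D : Matrix ι ι' ℝ}

theorem mul_transpose_add_inv_card_smul_eq_one [DecidableEq ι]
    (hcard : Fintype.card ι' = Fintype.card ι - 1) (hD1 : Dᵀ * D = 1)
    (hD2 : ∀ c, ∑ i, D i c = 0) :
    D * Dᵀ + (Fintype.card ι : ℝ)⁻¹ • of (fun _ _ => 1) = 1 := by
  rcases isEmpty_or_nonempty ι with hι | hι
  · ext i
    exact isEmptyElim i
  -- Completing `D` by the unit column `1 / √q` gives an orthogonal square matrix.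
  set u : Matrix ι Unit ℝ := of fun _ _ => (√(Fintype.card ι))⁻¹
  have hq₀ : 0 < Fintype.card ι := Fintype.card_pos
  have hq : (0 : ℝ) < Fintype.card ι := by exact_mod_cast hq₀
  have hu : u * uᵀ = (Fintype.card ι : ℝ)⁻¹ • of (fun _ _ => 1) := by
    ext
    simp [u, mul_apply, ← mul_inv, Real.mul_self_sqrt hq.le]
  have hDu : Dᵀ * u = 0 := by
    ext
    simp [u, mul_apply, ← Finset.sum_mul, hD2]
  have huD : uᵀ * D = 0 := by simpa using congrArg transpose hDu
  have huu : uᵀ * u = 1 := by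
    ext
    simp [u, mul_apply, ← mul_inv, Real.mul_self_sqrt hq.le, hq.ne']
  have e : ι ≃ ι' ⊕ Unit := Fintype.equivOfCardEq <| by
    simp only [Fintype.card_sum, Fintype.card_unit, hcard]
    omega
  rw [← hu, ← fromCols_mul_fromRows, fromCols_mul_fromRows_eq_one_comm e, fromRows_mul_fromCols,
    hD1, hDu, huD, huu, fromBlocks_one]

theorem mulVec_transpose_mulVec_of_sum_eq_zero [DecidableEq ι]
    (hcard : Fintype.card ι' = Fintype.card ι - 1) (hD1 : Dᵀ * D = 1)
    (hD2 : ∀ c, ∑ i, D i c = 0) {v : ι → ℝ} (hv : ∑ i, v i = 0) :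
    D *ᵥ (Dᵀ *ᵥ v) = v := by
  have hones : (of fun _ _ => 1 : Matrix ι ι ℝ) *ᵥ v = 0 :=
    funext fun _ => by simp [mulVec, dotProduct, hv]
  have := congrArg (· *ᵥ v) (mul_transpose_add_inv_card_smul_eq_one hcard hD1 hD2)
  rwa [add_mulVec, smul_mulVec, hones, smul_zero, add_zero, one_mulVec, ← mulVec_mulVec] at this

theorem kronecker_one_mulVec_transpose_kronecker_one_mulVec [DecidableEq ι]
    (hcard : Fintype.card ι' = Fintype.card ι - 1) (hD1 : Dᵀ * D = 1)
    (hD2 : ∀ c, ∑ i, D i c = 0) {x : ι × κ → ℝ} (hx : x ∈ blockSumZero ι κ ℝ) :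
    (D ⊗ₖ (1 : Matrix κ κ ℝ)) *ᵥ ((Dᵀ ⊗ₖ (1 : Matrix κ κ ℝ)) *ᵥ x) = x := by
  ext ⟨i, j⟩
  simp only [kronecker_one_mulVec_apply_s8]
  exact congrFun (mulVec_transpose_mulVec_of_sum_eq_zero hcard hD1 hD2 (hx j)) i

theorem transpose_kronecker_one_mulVec_kronecker_one_mulVec (hD1 : Dᵀ * D = 1)
    (y : ι' × κ → ℝ) :
    (Dᵀ ⊗ₖ (1 : Matrix κ κ ℝ)) *ᵥ ((D ⊗ₖ (1 : Matrix κ κ ℝ)) *ᵥ y) = y := by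
  rw [mulVec_mulVec, ← mul_kronecker_mul, hD1, Matrix.one_mul, one_kronecker_one, one_mulVec]

end OrthonormalBasisOfOnesComplement

end Matrix

theorem stmt8_general (n q p dκ : ℕ)
    (V : Matrix (Fin n) (Fin dκ) ℝ)
    (B : Matrix (Fin q × Fin n) (Fin p) ℝ)
    (hB : ∀ σ (j : Fin n), ∑ i : Fin q, B (i, j) σ = 0)
    (D : Matrix (Fin q) (Fin (q - 1)) ℝ)
    (hD1 : Dᵀ * D = 1)
    (hD2 : ∀ c, ∑ i : Fin q, D i c = 0) :
    (∀ x : Fin (q - 1) × Fin dκ → ℝ,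
      ∃ α : Fin p → ℝ, (∀ σ, 0 ≤ α σ) ∧
        (((1 : Matrix (Fin (q - 1)) (Fin (q - 1)) ℝ) ⊗ₖ Vᵀ) *
          ((Dᵀ ⊗ₖ (1 : Matrix (Fin n) (Fin n) ℝ)) * B)).mulVec α = x) ↔
    (∀ x : Fin q × Fin dκ → ℝ,
      (∀ y : Fin q × Fin dκ → ℝ, (∃ w : Fin dκ → ℝ, ∀ i j, y (i, j) = w j) →
        ∑ z : Fin q × Fin dκ, x z * y z = 0) →
      ∃ α : Fin p → ℝ, (∀ σ, 0 ≤ α σ) ∧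
        (((1 : Matrix (Fin q) (Fin q) ℝ) ⊗ₖ Vᵀ) * B).mulVec α = x) := by
  set M := ((1 : Matrix (Fin q) (Fin q) ℝ) ⊗ₖ Vᵀ) * B
  have hcard : Fintype.card (Fin (q - 1)) = Fintype.card (Fin q) - 1 := by simp
  have hreduced : ((1 : Matrix (Fin (q - 1)) (Fin (q - 1)) ℝ) ⊗ₖ Vᵀ) *
      ((Dᵀ ⊗ₖ (1 : Matrix (Fin n) (Fin n) ℝ)) * B) =
        (Dᵀ ⊗ₖ (1 : Matrix (Fin dκ) (Fin dκ) ℝ)) * M := by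
    simp only [M, ← Matrix.mul_assoc, ← mul_kronecker_mul, Matrix.one_mul, Matrix.mul_one]
  have hcone : nonnegCone M ⊆ blockSumZero (Fin q) (Fin dκ) ℝ := by
    rintro _ ⟨α, -, rfl⟩
    rw [← mulVec_mulVec]
    exact one_kronecker_mulVec_mem_blockSumZero _ (mulVec_mem_blockSumZero hB α)
  have key := Set.image_eq_univ_iff_subset_of_leftInverse
    (transpose_kronecker_one_mulVec_kronecker_one_mulVec hD1)
    (kronecker_one_mulVec_mem_blockSumZero hD2)
    (fun _ hx => kronecker_one_mulVec_transpose_kronecker_one_mulVec hcard hD1 hD2 hx) hcone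
  rw [← nonnegCone_mul, ← hreduced, Set.eq_univ_iff_forall, Set.subset_def] at key
  simp only [forall_sum_mul_blockConst_eq_zero_iff]
  exact key

/-- for a real eigenvalue `μ_κ` of `A*` with real eigenvector matrix `V_κ`,
`cone([I_{q-1} ⊗ V_κᵀ]𝐁_r) = ℝ^{(q-1)d_κ}` iff `cone([I_q ⊗ V_κᵀ]𝐁) ⊇ S_{d_κ}^⊥`,
where `𝐁_r = [Dᵀ ⊗ I_n]𝐁`. -/
theorem stmt8 (n q p dκ : ℕ) (hq : 2 ≤ q)
    (A : Matrix (Fin n) (Fin n) ℝ) (μ : ℝ)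
    (V : Matrix (Fin n) (Fin dκ) ℝ)
    (hVrank : Function.Injective V.mulVec)
    (hAV : Aᵀ * V = μ • V)
    (B : Matrix (Fin q × Fin n) (Fin p) ℝ)
    (hB : ∀ σ (j : Fin n), ∑ i : Fin q, B (i, j) σ = 0)
    (D : Matrix (Fin q) (Fin (q - 1)) ℝ)
    (hD1 : Dᵀ * D = 1)
    (hD2 : ∀ c, ∑ i : Fin q, D i c = 0) :
    (∀ x : Fin (q - 1) × Fin dκ → ℝ,
      ∃ α : Fin p → ℝ, (∀ σ, 0 ≤ α σ) ∧
        (((1 : Matrix (Fin (q - 1)) (Fin (q - 1)) ℝ) ⊗ₖ Vᵀ) *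
          ((Dᵀ ⊗ₖ (1 : Matrix (Fin n) (Fin n) ℝ)) * B)).mulVec α = x) ↔
    (∀ x : Fin q × Fin dκ → ℝ,
      (∀ y : Fin q × Fin dκ → ℝ, (∃ w : Fin dκ → ℝ, ∀ i j, y (i, j) = w j) →
        ∑ z : Fin q × Fin dκ, x z * y z = 0) →
      ∃ α : Fin p → ℝ, (∀ σ, 0 ≤ α σ) ∧
        (((1 : Matrix (Fin q) (Fin q) ℝ) ⊗ₖ Vᵀ) * B).mulVec α = x) :=
  stmt8_general n q p dκ V B hB D hD1 hD2
end

section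
/- Let N ∈ ℝ^{n×n} be nilpotent (N^n = 0) and C ∈ ℝ^{p×n}. Define the convex cones 𝒩 = {η ∈ ℝ^n : C e^{Nt} η ≤ 0 (entrywise) for all t ≥ 0} and ℳ = {η ∈ ℝ^n : C N^r η ≤ 0 for all r = 0,1,...,n−1}. Let 𝒟 be the smallest linear subspace of ℝ^n containing ℳ. Then 𝒩 ⊆ 𝒟. -/
open Matrix Polynomial Filter Finset
open scoped Nat

/-! For `η ∈ 𝒩` and a row `c` of `C`, the map `t ↦ c ⬝ᵥ exp (t • N) η` is a polynomial,
nonpositive on `[0, ∞)`, whose `k`-th derivative is `t ↦ c ⬝ᵥ N ^ k exp (t • N) η`. Its leading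
coefficient is therefore nonpositive, hence so is that of each derivative, so for `T` large all
these derivatives are nonpositive at `T`: `exp (T • N) η ∈ ℳ` (`powerCone N n C`). As `ℳ` is
`N`-invariant, its span is invariant under the polynomial `exp (-T • N)` in `N`, which maps
`exp (T • N) η` back to `η`. -/

theorem NormedSpace.exp_eq_sum_of_pow_eq_zero (𝕂 : Type*) {𝔸 : Type*} [Field 𝕂] [CharZero 𝕂]
    [Ring 𝔸] [Algebra 𝕂 𝔸] [TopologicalSpace 𝔸] [IsTopologicalRing 𝔸] {x : 𝔸} {k : ℕ}
    (hx : x ^ k = 0) : NormedSpace.exp x = ∑ i ∈ range k, (i !⁻¹ : 𝕂) • x ^ i := by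
  rw [NormedSpace.exp_eq_tsum 𝕂]
  refine tsum_eq_sum fun i hi => ?_
  rw [pow_eq_zero_of_le (by simpa using hi) hx, smul_zero]

namespace Polynomial

theorem eventually_eval_nonpos_iff (P : ℝ[X]) :
    (∀ᶠ t in atTop, P.eval t ≤ 0) ↔ P.leadingCoeff ≤ 0 := by
  rcases lt_or_ge 0 P.degree with hdeg | hdeg
  · refine ⟨fun h => ?_, fun h =>
      (P.tendsto_atBot_of_leadingCoeff_nonpos hdeg h).eventually_le_atBot 0⟩
    by_contra! hlc
    obtain ⟨t, hle, hgt⟩ :=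
      (h.and ((P.tendsto_atTop_of_leadingCoeff_nonneg hdeg hlc.le).eventually_gt_atTop 0)).exists
    exact hgt.not_ge hle
  · rw [eq_C_of_degree_le_zero hdeg]
    simp only [eval_C, leadingCoeff_C, eventually_const]

theorem leadingCoeff_iterate_derivative_nonpos {P : ℝ[X]} (hP : P.leadingCoeff ≤ 0) (k : ℕ) :
    (derivative^[k] P).leadingCoeff ≤ 0 := by
  induction k with
  | zero => exact hP
  | succ k ih =>
    rw [Function.iterate_succ_apply', leadingCoeff_derivative]
    exact mul_nonpos_of_nonpos_of_nonneg ih (Nat.cast_nonneg _)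

theorem eventually_forall_eval_iterate_derivative_nonpos {P : ℝ[X]}
    (hP : ∀ᶠ t in atTop, P.eval t ≤ 0) :
    ∀ᶠ t in atTop, ∀ k, (derivative^[k] P).eval t ≤ 0 := by
  rw [eventually_eval_nonpos_iff] at hP
  have hlow : ∀ᶠ t in atTop, ∀ k ∈ range (P.natDegree + 1), (derivative^[k] P).eval t ≤ 0 :=
    (eventually_all_finset _).2 fun k _ =>
      (eventually_eval_nonpos_iff _).2 (leadingCoeff_iterate_derivative_nonpos hP k)
  filter_upwards [hlow] with t ht k
  rcases lt_or_ge P.natDegree k with hk | hk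
  · simp [iterate_derivative_eq_zero hk]
  · exact ht k (mem_range.2 (Nat.lt_succ_of_le hk))

end Polynomial

namespace Matrix

variable {ι κ : Type*} [Fintype ι] [DecidableEq ι] {N : Matrix ι ι ℝ} {d : ℕ}

theorem exp_smul_mulVec_eq_sum (hN : N ^ d = 0) (t : ℝ) (v : ι → ℝ) :
    NormedSpace.exp (t • N) *ᵥ v = ∑ r ∈ range d, (t ^ r / r !) • (N ^ r *ᵥ v) := by
  rw [NormedSpace.exp_eq_sum_of_pow_eq_zero ℝ (k := d) (by rw [_root_.smul_pow, hN, smul_zero]),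
    sum_mulVec]
  refine sum_congr rfl fun r _ => ?_
  rw [_root_.smul_pow, smul_smul, smul_mulVec, inv_mul_eq_div]

variable (N d) in
noncomputable def expPoly (c v : ι → ℝ) : ℝ[X] :=
  ∑ r ∈ range d, Polynomial.C (c ⬝ᵥ (N ^ r *ᵥ v) / r !) * X ^ r

theorem eval_expPoly (hN : N ^ d = 0) (c v : ι → ℝ) (t : ℝ) :
    (expPoly N d c v).eval t = c ⬝ᵥ (NormedSpace.exp (t • N) *ᵥ v) := by
  rw [exp_smul_mulVec_eq_sum hN, dotProduct_sum, expPoly, eval_finsetSum]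
  refine sum_congr rfl fun r _ => ?_
  rw [dotProduct_smul, eval_mul, eval_C, eval_pow, eval_X, smul_eq_mul]
  ring

theorem coeff_expPoly (hN : N ^ d = 0) (c v : ι → ℝ) (k : ℕ) :
    (expPoly N d c v).coeff k = c ⬝ᵥ (N ^ k *ᵥ v) / k ! := by
  simp only [expPoly, finsetSum_coeff, coeff_C_mul_X_pow]
  rw [sum_ite_eq]
  split_ifs with hk
  · rfl
  · rw [pow_eq_zero_of_le (by simpa using hk) hN]
    simp

theorem derivative_expPoly (hN : N ^ d = 0) (c v : ι → ℝ) :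
    derivative (expPoly N d c v) = expPoly N d c (N *ᵥ v) := by
  ext k
  rw [coeff_derivative, coeff_expPoly hN, coeff_expPoly hN, mulVec_mulVec, ← pow_succ,
    Nat.factorial_succ]
  push_cast
  field_simp

theorem iterate_derivative_expPoly (hN : N ^ d = 0) (c v : ι → ℝ) (k : ℕ) :
    derivative^[k] (expPoly N d c v) = expPoly N d c (N ^ k *ᵥ v) := by
  induction k generalizing v with
  | zero => simp
  | succ k ih =>
    rw [Function.iterate_succ_apply, derivative_expPoly hN, ih, mulVec_mulVec, ← pow_succ]

variable (N d) in
def powerCone (C : Matrix κ ι ℝ) : Set (ι → ℝ) :=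
  {η | ∀ (σ : κ) (r : ℕ), r ≤ d - 1 → (C *ᵥ (N ^ r *ᵥ η)) σ ≤ 0}

variable {C : Matrix κ ι ℝ}

theorem mulVec_mem_powerCone (hN : N ^ d = 0) {η : ι → ℝ} (hη : η ∈ powerCone N d C) :
    N *ᵥ η ∈ powerCone N d C := by
  intro σ r hr
  rw [mulVec_mulVec _ (N ^ r), ← pow_succ]
  rcases le_or_gt (r + 1) (d - 1) with hr' | hr'
  · exact hη σ (r + 1) hr'
  · rw [pow_eq_zero_of_le (by omega) hN, zero_mulVec, mulVec_zero]
    exact le_rfl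

theorem pow_mulVec_mem_span_powerCone (hN : N ^ d = 0) {x : ι → ℝ}
    (hx : x ∈ Submodule.span ℝ (powerCone N d C)) (r : ℕ) :
    N ^ r *ᵥ x ∈ Submodule.span ℝ (powerCone N d C) := by
  have hinv : Submodule.span ℝ (powerCone N d C) ≤
      (Submodule.span ℝ (powerCone N d C)).comap (mulVecLin N) :=
    Submodule.span_le.2 fun η hη => Submodule.subset_span (mulVec_mem_powerCone hN hη)
  induction r with
  | zero => simpa using hx
  | succ r ih => simpa [pow_succ', ← mulVec_mulVec] using hinv ih

theorem exp_smul_mulVec_mem_span_powerCone (hN : N ^ d = 0) {x : ι → ℝ}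
    (hx : x ∈ Submodule.span ℝ (powerCone N d C)) (t : ℝ) :
    NormedSpace.exp (t • N) *ᵥ x ∈ Submodule.span ℝ (powerCone N d C) := by
  rw [exp_smul_mulVec_eq_sum hN]
  exact Submodule.sum_mem _ fun r _ =>
    Submodule.smul_mem _ _ (pow_mulVec_mem_span_powerCone hN hx r)

theorem eventually_exp_smul_mulVec_mem_powerCone [Finite κ] (hN : N ^ d = 0) {η : ι → ℝ}
    (hη : ∀ᶠ t : ℝ in atTop, ∀ σ, (C *ᵥ (NormedSpace.exp (t • N) *ᵥ η)) σ ≤ 0) :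
    ∀ᶠ t : ℝ in atTop, NormedSpace.exp (t • N) *ᵥ η ∈ powerCone N d C := by
  have hpoly : ∀ σ, ∀ᶠ t in atTop, (expPoly N d (C σ) η).eval t ≤ 0 := fun σ => by
    filter_upwards [hη] with t ht
    rw [eval_expPoly hN]
    exact ht σ
  filter_upwards [eventually_all.2 fun σ =>
    Polynomial.eventually_forall_eval_iterate_derivative_nonpos (hpoly σ)] with t ht σ r _
  have hcomm : N ^ r *ᵥ (NormedSpace.exp (t • N) *ᵥ η) =
      NormedSpace.exp (t • N) *ᵥ (N ^ r *ᵥ η) := by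
    rw [mulVec_mulVec, mulVec_mulVec, (((Commute.refl N).smul_right t).pow_left r).exp_right.eq]
  have := ht σ r
  rw [iterate_derivative_expPoly hN, eval_expPoly hN, ← hcomm] at this
  exact this

theorem mem_span_powerCone_of_exp_smul_mulVec_mem (hN : N ^ d = 0) {η : ι → ℝ} {T : ℝ}
    (hT : NormedSpace.exp (T • N) *ᵥ η ∈ powerCone N d C) :
    η ∈ Submodule.span ℝ (powerCone N d C) := by
  have hinv : NormedSpace.exp ((-T) • N) * NormedSpace.exp (T • N) = 1 := by
    rw [← exp_add_of_commute _ _ (((Commute.refl N).smul_left _).smul_right _), ← add_smul,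
      neg_add_cancel, zero_smul, NormedSpace.exp_zero]
  have := exp_smul_mulVec_mem_span_powerCone hN (Submodule.subset_span hT) (-T)
  rwa [mulVec_mulVec, hinv, one_mulVec] at this

end Matrix

/-- pivotal lemma: for nilpotent `N` and `C`, the cone
`𝒩 = {η : C e^{Nt} η ≤ 0 ∀ t ≥ 0}` is contained in the smallest subspace containing
`ℳ = {η : C N^r η ≤ 0 ∀ r < n}`. -/
theorem stmt12 (n p : ℕ)
    (N : Matrix (Fin n) (Fin n) ℝ) (hN : N ^ n = 0)
    (C : Matrix (Fin p) (Fin n) ℝ) :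
    {η : Fin n → ℝ | ∀ t : ℝ, 0 ≤ t → ∀ σ : Fin p,
        C.mulVec ((NormedSpace.exp (t • N)).mulVec η) σ ≤ 0} ⊆
    (Submodule.span ℝ
      {η : Fin n → ℝ | ∀ (σ : Fin p) (r : ℕ), r ≤ n - 1 →
        C.mulVec ((N ^ r).mulVec η) σ ≤ 0} : Submodule ℝ (Fin n → ℝ)) := by
  intro η hη
  obtain ⟨T, hT⟩ := (eventually_exp_smul_mulVec_mem_powerCone hN
    ((eventually_ge_atTop 0).mono fun t ht => hη t ht)).exists
  exact mem_span_powerCone_of_exp_smul_mulVec_mem hN hT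
end

section
/- Let N ∈ ℝ^{n×n} satisfy N^n = 0 and let C ∈ ℝ^{p×n} with rows C_1,...,C_p. Let ℳ = {η : C_σ N^r η ≤ 0 for all σ and all 0 ≤ r ≤ n−1}, let 𝒫⁻ = {(σ,r) : there exists η ∈ ℳ with C_σ N^r η < 0}, and 𝒫₀ its complement in {1,...,p}×{0,...,n−1}. Then the set ℳ₀ = {η : C_σ N^r η ≤ 0 for all (σ,r) ∈ 𝒫₀} equals the subspace 𝒟₀ = {η : C_σ N^r η = 0 for all (σ,r) ∈ 𝒫₀}, and this subspace is the smallest subspace containing ℳ. -/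
/-!
The constraints `C_σ N^r η ≤ 0` are finitely many linear inequalities, so the statement holds
for any finite system `f i x ≤ 0` (`i ∈ s`) of linear functionals on a vector space over an
ordered field: `ℳ` is `nonposCone f s` and `𝒫₀` is `implicitEqualities f s`. Adding one witness
of strictness for each index outside `𝒫₀` gives `x₀ ∈ ℳ` that is strict on all of them at once.
If `x` satisfies the `𝒫₀` inequalities, then `x + t • x₀ ∈ ℳ` for large `t`; since the
functionals of `𝒫₀` vanish on `ℳ`, this forces them to vanish at `x`, and it writes `x` as a
difference of two elements of `ℳ`.
-/

variable {𝕜 E ι : Type*} [Field 𝕜] [LinearOrder 𝕜] [AddCommGroup E] [Module 𝕜 E]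
  (f : ι → E →ₗ[𝕜] 𝕜) (s : Set ι)

def nonposCone : Set E := {x | ∀ i ∈ s, f i x ≤ 0}

def implicitEqualities : Set ι := {i | i ∈ s ∧ ¬∃ x ∈ nonposCone f s, f i x < 0}

variable {f s}

theorem apply_eq_zero_of_mem_implicitEqualities {i : ι} (hi : i ∈ implicitEqualities f s)
    {x : E} (hx : x ∈ nonposCone f s) : f i x = 0 :=
  le_antisymm (hx i hi.1) (not_lt.mp fun h => hi.2 ⟨x, hx, h⟩)

variable [IsStrictOrderedRing 𝕜]

theorem sum_mem_nonposCone {T : Finset ι} {w : ι → E} (hw : ∀ j ∈ T, w j ∈ nonposCone f s) :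
    ∑ j ∈ T, w j ∈ nonposCone f s := fun i hi => by
  rw [map_sum]
  exact Finset.sum_nonpos fun j hj => hw j hj i hi

theorem exists_mem_nonposCone_forall_lt_zero (hs : s.Finite) :
    ∃ x₀ ∈ nonposCone f s, ∀ i ∈ s \ implicitEqualities f s, f i x₀ < 0 := by
  have hwit : ∀ i ∈ s \ implicitEqualities f s, ∃ x ∈ nonposCone f s, f i x < 0 :=
    fun i hi => not_not.mp fun h => hi.2 ⟨hi.1, h⟩
  choose! w hwC hwneg using hwit
  set T := (hs.sdiff (t := implicitEqualities f s)).toFinset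
  have hT : ∀ j ∈ T, w j ∈ nonposCone f s := fun j hj => hwC j (by simpa [T] using hj)
  refine ⟨∑ j ∈ T, w j, sum_mem_nonposCone hT, fun i hi => ?_⟩
  have hiT : i ∈ T := by simpa [T] using hi
  calc f i (∑ j ∈ T, w j) = ∑ j ∈ T, f i (w j) := map_sum _ _ _
    _ < ∑ j ∈ T, 0 := Finset.sum_lt_sum (fun j hj => hT j hj i hi.1) ⟨i, hiT, hwneg i hi⟩
    _ = 0 := Finset.sum_const_zero

theorem exists_add_smul_mem_nonposCone (hs : s.Finite) {x₀ : E} (hx₀ : x₀ ∈ nonposCone f s)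
    (hneg : ∀ i ∈ s \ implicitEqualities f s, f i x₀ < 0) {x : E}
    (hx : ∀ i ∈ implicitEqualities f s, f i x ≤ 0) : ∃ t : 𝕜, x + t • x₀ ∈ nonposCone f s := by
  suffices ∀ᶠ t in Filter.atTop, ∀ i ∈ s, f i (x + t • x₀) ≤ 0 from this.exists
  refine (Filter.eventually_all_finite hs).2 fun i hi => ?_
  simp only [map_add, map_smul, smul_eq_mul]
  by_cases hI : i ∈ implicitEqualities f s
  · simp only [apply_eq_zero_of_mem_implicitEqualities hI hx₀, mul_zero, add_zero]
    exact Filter.Eventually.of_forall fun _ => hx i hI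
  · have hpos : 0 < -f i x₀ := neg_pos.mpr (hneg i ⟨hi, hI⟩)
    filter_upwards [Filter.eventually_ge_atTop (f i x / -f i x₀)] with t ht
    have := (div_le_iff₀ hpos).mp ht
    linarith

theorem setOf_forall_implicitEqualities_le_eq (hs : s.Finite) :
    {x | ∀ i ∈ implicitEqualities f s, f i x ≤ 0} =
      {x | ∀ i ∈ implicitEqualities f s, f i x = 0} := by
  obtain ⟨x₀, hx₀, hneg⟩ := exists_mem_nonposCone_forall_lt_zero (f := f) hs
  ext x
  refine ⟨fun hx i hi => ?_, fun hx i hi => (hx i hi).le⟩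
  obtain ⟨t, ht⟩ := exists_add_smul_mem_nonposCone hs hx₀ hneg hx
  have := apply_eq_zero_of_mem_implicitEqualities hi ht
  rwa [map_add, map_smul, apply_eq_zero_of_mem_implicitEqualities hi hx₀, smul_zero,
    add_zero] at this

theorem span_nonposCone (hs : s.Finite) :
    (Submodule.span 𝕜 (nonposCone f s) : Set E) =
      {x | ∀ i ∈ implicitEqualities f s, f i x = 0} := by
  obtain ⟨x₀, hx₀, hneg⟩ := exists_mem_nonposCone_forall_lt_zero (f := f) hs
  refine subset_antisymm (fun x hx i hi => ?_) fun x hx => ?_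
  · have : Submodule.span 𝕜 (nonposCone f s) ≤ LinearMap.ker (f i) :=
      Submodule.span_le.mpr fun y hy => apply_eq_zero_of_mem_implicitEqualities hi hy
    exact this hx
  · obtain ⟨t, ht⟩ := exists_add_smul_mem_nonposCone hs hx₀ hneg fun i hi => (hx i hi).le
    rw [show x = (x + t • x₀) - t • x₀ by abel]
    exact sub_mem (Submodule.subset_span ht) (Submodule.smul_mem _ _ (Submodule.subset_span hx₀))

theorem stmt13_general (n p : ℕ)
    (N : Matrix (Fin n) (Fin n) ℝ)
    (C : Matrix (Fin p) (Fin n) ℝ)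
    (M : Set (Fin n → ℝ))
    (hM : M = {η | ∀ (σ : Fin p) (r : ℕ), r ≤ n - 1 → C.mulVec ((N ^ r).mulVec η) σ ≤ 0})
    (P0 : Set (Fin p × ℕ))
    (hP0 : P0 = {sr | sr.2 ≤ n - 1 ∧
      ¬ ∃ η ∈ M, C.mulVec ((N ^ sr.2).mulVec η) sr.1 < 0}) :
    ({η | ∀ sr ∈ P0, C.mulVec ((N ^ sr.2).mulVec η) sr.1 ≤ 0} =
      {η | ∀ sr ∈ P0, C.mulVec ((N ^ sr.2).mulVec η) sr.1 = 0}) ∧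
    ((Submodule.span ℝ M : Set (Fin n → ℝ)) =
      {η | ∀ sr ∈ P0, C.mulVec ((N ^ sr.2).mulVec η) sr.1 = 0}) := by
  let f : Fin p × ℕ → (Fin n → ℝ) →ₗ[ℝ] ℝ := fun sr =>
    LinearMap.proj sr.1 ∘ₗ C.mulVecLin ∘ₗ (N ^ sr.2).mulVecLin
  let s : Set (Fin p × ℕ) := {sr | sr.2 ≤ n - 1}
  have hs : s.Finite := Set.univ.toFinite.prod (Set.finite_Iic (n - 1)) |>.subset
    fun sr hsr => ⟨Set.mem_univ _, hsr⟩
  have hMf : M = nonposCone f s := by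
    subst hM; ext η; exact ⟨fun h sr => h sr.1 sr.2, fun h σ r => h (σ, r)⟩
  have hP0f : P0 = implicitEqualities f s := by
    rw [hP0, hMf]; rfl
  rw [hMf, hP0f]
  exact ⟨setOf_forall_implicitEqualities_le_eq hs, span_nonposCone hs⟩

/-- with `ℳ = {η : C_σ N^r η ≤ 0 ∀(σ,r)}`,
`𝒫⁻ = {(σ,r) : ∃ η ∈ ℳ, C_σ N^r η < 0}` and `𝒫₀` its complement, the set
`ℳ₀` of vectors satisfying the inequalities indexed by `𝒫₀` equals the subspace `𝒟₀`
where these hold with equality, and `𝒟₀` is the smallest subspace containing `ℳ`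
(i.e. it is the span of `ℳ`). -/
theorem stmt13 (n p : ℕ)
    (N : Matrix (Fin n) (Fin n) ℝ) (hN : N ^ n = 0)
    (C : Matrix (Fin p) (Fin n) ℝ)
    (M : Set (Fin n → ℝ))
    (hM : M = {η | ∀ (σ : Fin p) (r : ℕ), r ≤ n - 1 → C.mulVec ((N ^ r).mulVec η) σ ≤ 0})
    (P0 : Set (Fin p × ℕ))
    (hP0 : P0 = {sr | sr.2 ≤ n - 1 ∧
      ¬ ∃ η ∈ M, C.mulVec ((N ^ sr.2).mulVec η) sr.1 < 0}) :
    ({η | ∀ sr ∈ P0, C.mulVec ((N ^ sr.2).mulVec η) sr.1 ≤ 0} =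
      {η | ∀ sr ∈ P0, C.mulVec ((N ^ sr.2).mulVec η) sr.1 = 0}) ∧
    ((Submodule.span ℝ M : Set (Fin n → ℝ)) =
      {η | ∀ sr ∈ P0, C.mulVec ((N ^ sr.2).mulVec η) sr.1 = 0}) :=
  stmt13_general n p N C M hM P0 hP0
end

section
/- Let C ∈ ℝ^{p×n}, N ∈ ℝ^{n×n} with N^n = 0, and suppose η ∈ ℝ^n satisfies C(I + Nt + N²t²/2 + ⋯ + N^{n−1}t^{n−1}/(n−1)!)η ≤ 0 entrywise for all t ≥ 0. For each row index σ let r_σ be the smallest index such that C_σ N^r η = 0 for all r ≥ r_σ. Then C_σ N^{r_σ−1} η < 0 whenever r_σ ≥ 1, and consequently C_σ N^r η ≤ 0 for all r ≥ max{0, r_σ − 1}. -/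
/-!
Evaluating `C (∑_{r<n} t^r/r! • N^r) η` in row `σ` gives the polynomial `∑_r (t^r/r!) C_σ N^r η`,
whose coefficients vanish from degree `r_σ` on. A real polynomial that is nonpositive on
`[0, ∞)` has nonpositive leading coefficient, since otherwise it tends to `+∞`; and
`N^n = 0` forces `r_σ - 1 < n`, so the coefficient of degree `r_σ - 1` does appear.
-/

open Matrix Polynomial Filter

namespace Polynomial

theorem leadingCoeff_nonpos_of_eval_nonpos {P : ℝ[X]} (h : ∀ t, 0 ≤ t → P.eval t ≤ 0) :
    P.leadingCoeff ≤ 0 := by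
  by_contra! hpos
  rcases P.natDegree.eq_zero_or_pos with hdeg | hdeg
  · rw [leadingCoeff, hdeg, coeff_zero_eq_eval_zero] at hpos
    exact (h 0 le_rfl).not_gt hpos
  · obtain ⟨t, ht⟩ := ((tendsto_atTop_of_leadingCoeff_nonneg P (natDegree_pos_iff_degree_pos.mp hdeg)
      hpos.le).eventually_gt_atTop 0 |>.and (eventually_ge_atTop 0)).exists
    exact (h t ht.2).not_gt ht.1

theorem coeff_nonpos_of_eval_nonpos {P : ℝ[X]} {k : ℕ} (h : ∀ t, 0 ≤ t → P.eval t ≤ 0)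
    (hk : P.natDegree ≤ k) : P.coeff k ≤ 0 := by
  rcases hk.eq_or_lt with hk | hk
  · exact hk ▸ leadingCoeff_nonpos_of_eval_nonpos h
  · exact (coeff_eq_zero_of_natDegree_lt hk).le

end Polynomial

theorem coeff_nonpos_of_sum_pow_div_factorial_mul_nonpos {n k : ℕ} (a : ℕ → ℝ) (hkn : k < n)
    (ha : ∀ r, k < r → a r = 0)
    (h : ∀ t : ℝ, 0 ≤ t → ∑ r ∈ Finset.range n, t ^ r / r.factorial * a r ≤ 0) :
    a k ≤ 0 := by
  let P : ℝ[X] := ∑ r ∈ Finset.range n, monomial r (a r / r.factorial)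
  have heval (t : ℝ) : P.eval t = ∑ r ∈ Finset.range n, t ^ r / r.factorial * a r := by
    simp only [P, eval_finsetSum, eval_monomial]
    exact Finset.sum_congr rfl fun r _ => by ring
  have hdeg : P.natDegree ≤ k := natDegree_sum_le_of_forall_le _ _ fun r _ => by
    rcases le_or_gt r k with hr | hr
    · exact (natDegree_monomial_le _).trans hr
    · simp [ha r hr]
  have hcoeff : P.coeff k = a k / k.factorial := by
    simp [P, coeff_monomial, hkn]
  have hle := coeff_nonpos_of_eval_nonpos (fun t ht => (heval t).trans_le (h t ht)) hdeg
  rw [hcoeff] at hle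
  simpa using (div_le_iff₀ (Nat.cast_pos.mpr k.factorial_pos)).mp hle

theorem Matrix.mulVec_sum_smul_mulVec {ι m n p α : Type*} [CommSemiring α] [Fintype n] [Fintype p]
    (C : Matrix m p α) (s : Finset ι) (f : ι → α) (M : ι → Matrix p n α) (η : n → α) :
    C *ᵥ ((∑ i ∈ s, f i • M i) *ᵥ η) = ∑ i ∈ s, f i • C *ᵥ (M i *ᵥ η) := by
  simp only [sum_mulVec, mulVec_sum, smul_mulVec, mulVec_smul]

/-- if every entry of `C(Σ_{r<n} N^r t^r/r!)η` is nonpositive for all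
`t ≥ 0`, and `r_σ` is the smallest index with `C_σ N^r η = 0` for all `r ≥ r_σ`, then
`C_σ N^{r_σ−1} η < 0` whenever `r_σ ≥ 1`, and `C_σ N^r η ≤ 0` for all
`r ≥ max{0, r_σ − 1}`. -/
theorem stmt15 (n p : ℕ)
    (N : Matrix (Fin n) (Fin n) ℝ) (hN : N ^ n = 0)
    (C : Matrix (Fin p) (Fin n) ℝ)
    (η : Fin n → ℝ)
    (hη : ∀ t : ℝ, 0 ≤ t → ∀ σ : Fin p,
      C.mulVec ((∑ r ∈ Finset.range n, (t ^ r / r.factorial) • N ^ r).mulVec η) σ ≤ 0)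
    (rσ : Fin p → ℕ)
    (hr1 : ∀ σ, ∀ r, rσ σ ≤ r → C.mulVec ((N ^ r).mulVec η) σ = 0)
    (hr2 : ∀ σ, 1 ≤ rσ σ → C.mulVec ((N ^ (rσ σ - 1)).mulVec η) σ ≠ 0) :
    (∀ σ, 1 ≤ rσ σ → C.mulVec ((N ^ (rσ σ - 1)).mulVec η) σ < 0) ∧
    (∀ σ (r : ℕ), rσ σ - 1 ≤ r → C.mulVec ((N ^ r).mulVec η) σ ≤ 0) := by
  have hrow (σ : Fin p) (hσ : 1 ≤ rσ σ) : C.mulVec ((N ^ (rσ σ - 1)).mulVec η) σ ≤ 0 := by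
    have hkn : rσ σ - 1 < n := by
      by_contra! hnk
      apply hr2 σ hσ
      rw [← Nat.add_sub_cancel' hnk, pow_add, hN, zero_mul, zero_mulVec, mulVec_zero, Pi.zero_apply]
    refine coeff_nonpos_of_sum_pow_div_factorial_mul_nonpos (fun r => C.mulVec ((N ^ r).mulVec η) σ)
      hkn (fun r hr => hr1 σ r (by omega)) fun t ht => ?_
    simpa only [mulVec_sum_smul_mulVec, Finset.sum_apply, Pi.smul_apply, smul_eq_mul] using hη t ht σ
  refine ⟨fun σ hσ => (hrow σ hσ).lt_of_ne (hr2 σ hσ), fun σ r hr => ?_⟩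
  rcases le_or_gt (rσ σ) r with hle | hlt
  · exact (hr1 σ r hle).le
  · obtain rfl : r = rσ σ - 1 := by omega
    exact hrow σ (by omega)
end

section
/- Let A_κ ∈ ℂ^{d×d} have a single distinct eigenvalue μ with Im μ ≠ 0, let b ∈ ℂ^{1×d} be a row vector and f ∈ ℂ^d. If Re(b e^{A_κ* t} f) ≤ 0 for all t ≥ τ (some τ ≥ 0), then b e^{A_κ* t} f = 0 for all t. -/
/-!
Since `A_κ*` has the single eigenvalue `μ`, Cayley–Hamilton makes `N = A_κ* - μ` nilpotent, so
`b e^{t A_κ*} f = e^{μ t} Q(t)` for a complex polynomial `Q`. If `Q ≠ 0` has leading coefficient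
`c`, then `Q(t) / t^{deg Q} → c`, and since `Im μ ≠ 0` there are arbitrarily large `t` at which
`e^{μ t}` is a positive real multiple of `e^{-i arg c}`. Along those `t` the sign condition gives
`Re(e^{-i arg c} c) = ‖c‖ ≤ 0`, so `c = 0`.
-/

open Matrix Polynomial
open Filter Topology Bornology Finset Complex Real
open scoped Nat

namespace NormedSpace

theorem exp_eq_sum_range_of_pow_eq_zero {𝕂 𝔸 : Type*} [Field 𝕂] [CharZero 𝕂] [Ring 𝔸]
    [Algebra 𝕂 𝔸] [TopologicalSpace 𝔸] [IsTopologicalRing 𝔸] [T2Space 𝔸]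
    {y : 𝔸} {n : ℕ} (hy : y ^ n = 0) :
    exp y = ∑ k ∈ range n, (k !⁻¹ : 𝕂) • y ^ k := by
  rw [exp_eq_tsum 𝕂]
  exact tsum_eq_sum fun k hk => by
    rw [pow_eq_zero_of_le (by simpa using hk) hy, smul_zero]

theorem exp_smul_of_pow_sub_algebraMap_eq_zero {𝕂 𝔸 : Type*} [RCLike 𝕂] [NormedRing 𝔸]
    [NormedAlgebra 𝕂 𝔸] [CompleteSpace 𝔸] {x : 𝔸} {μ : 𝕂} {n : ℕ}
    (hx : (x - algebraMap 𝕂 𝔸 μ) ^ n = 0) (s : 𝕂) :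
    exp (s • x) = exp (s * μ) • ∑ k ∈ range n, (s ^ k / k !) • (x - algebraMap 𝕂 𝔸 μ) ^ k := by
  let _ : NormedAlgebra ℚ 𝔸 := NormedAlgebra.restrictScalars ℚ 𝕂 𝔸
  set N := x - algebraMap 𝕂 𝔸 μ
  have hsplit : s • x = algebraMap 𝕂 𝔸 (s * μ) + s • N := by
    simp only [N, smul_sub, Algebra.algebraMap_eq_smul_one, smul_smul]
    abel
  have hN : (s • N) ^ n = 0 := by rw [_root_.smul_pow, hx, smul_zero]
  rw [hsplit, exp_add_of_commute (Algebra.commutes _ _), ← algebraMap_exp_comm,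
    exp_eq_sum_range_of_pow_eq_zero (𝕂 := 𝕂) hN, ← Algebra.smul_def]
  congr 1
  refine Finset.sum_congr rfl fun k _ => ?_
  rw [_root_.smul_pow, smul_smul, div_eq_inv_mul]

end NormedSpace

namespace Matrix

variable {m 𝕂 : Type*} [Fintype m] [DecidableEq m] [RCLike 𝕂]

-- `exp` does not depend on a norm, so any matrix norm (here the operator norm) may be used.
theorem exp_smul_of_pow_sub_algebraMap_eq_zero {M : Matrix m m 𝕂} {μ : 𝕂} {n : ℕ}
    (hM : (M - algebraMap 𝕂 _ μ) ^ n = 0) (s : 𝕂) :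
    NormedSpace.exp (s • M) = NormedSpace.exp (s * μ) •
      ∑ k ∈ range n, (s ^ k / k !) • (M - algebraMap 𝕂 _ μ) ^ k :=
  open scoped Norms.Operator in NormedSpace.exp_smul_of_pow_sub_algebraMap_eq_zero hM s

theorem exists_polynomial_dotProduct_exp_smul_mulVec {M : Matrix m m 𝕂} {μ : 𝕂} {n : ℕ}
    (hM : (M - algebraMap 𝕂 _ μ) ^ n = 0) (b f : m → 𝕂) :
    ∃ Q : 𝕂[X], ∀ s : 𝕂, b ⬝ᵥ (NormedSpace.exp (s • M) *ᵥ f)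
      = NormedSpace.exp (s * μ) * Q.eval s := by
  refine ⟨∑ k ∈ range n, monomial k (b ⬝ᵥ ((M - algebraMap 𝕂 _ μ) ^ k *ᵥ f) / k !), fun s => ?_⟩
  rw [exp_smul_of_pow_sub_algebraMap_eq_zero hM s, smul_mulVec, dotProduct_smul, sum_mulVec,
    dotProduct_sum, eval_finsetSum, smul_eq_mul]
  congr 1
  refine Finset.sum_congr rfl fun k _ => ?_
  rw [smul_mulVec, dotProduct_smul, eval_monomial, smul_eq_mul]
  ring

end Matrix

theorem Polynomial.tendsto_eval_div_pow_natDegree_cobounded {𝕜 : Type*} [NormedField 𝕜]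
    (P : 𝕜[X]) :
    Tendsto (fun x => P.eval x / x ^ P.natDegree) (cobounded 𝕜) (𝓝 P.leadingCoeff) := by
  have hrev : Tendsto (fun x => P.reverse.eval x⁻¹) (cobounded 𝕜) (𝓝 P.leadingCoeff) := by
    rw [← coeff_zero_reverse, coeff_zero_eq_eval_zero]
    exact (P.reverse.continuous.tendsto 0).comp tendsto_inv₀_cobounded
  refine hrev.congr' ?_
  filter_upwards [eventually_ne_cobounded 0] with x hx
  let _ := invertibleOfNonzero hx
  rw [eq_div_iff (pow_ne_zero _ hx), ← invOf_eq_inv]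
  exact eval₂_reverse_mul_pow (RingHom.id 𝕜) x P

theorem Complex.frequently_exp_ofReal_mul_I_eq {ω : ℝ} (hω : ω ≠ 0) (θ : ℝ) :
    ∃ᶠ t : ℝ in atTop, cexp (↑(t * ω) * I) = cexp (θ * I) := by
  have hper : Function.Periodic (fun t : ℝ => cexp (↑(t * ω) * I)) (2 * π / ω) := fun t => by
    dsimp only
    rw [show (t + 2 * π / ω) * ω = t * ω + 2 * π by field_simp]
    push_cast
    rw [add_mul, exp_add, exp_two_pi_mul_I, mul_one]
  obtain ⟨T, hT, hTpos⟩ : ∃ T, Function.Periodic (fun t : ℝ => cexp (↑(t * ω) * I)) T ∧ 0 < T := by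
    refine ⟨|2 * π / ω|, ?_, abs_pos.2 (div_ne_zero (by positivity) hω)⟩
    rcases abs_choice (2 * π / ω) with h | h <;> rw [h]
    exacts [hper, hper.neg]
  have hseq : Tendsto (fun k : ℕ => θ / ω + k * T) atTop atTop :=
    tendsto_atTop_add_const_left _ _ (tendsto_natCast_atTop_atTop.atTop_mul_const hTpos)
  refine hseq.frequently (Frequently.of_forall fun k => ?_)
  exact (hT.nat_mul k (θ / ω)).trans (by rw [div_mul_cancel₀ θ hω])

theorem Polynomial.eq_zero_of_eventually_re_exp_mul_eval_nonpos {Q : ℂ[X]} {μ : ℂ}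
    (hμ : μ.im ≠ 0) (h : ∀ᶠ t : ℝ in atTop, (cexp (t * μ) * Q.eval (t : ℂ)).re ≤ 0) :
    Q = 0 := by
  set c := Q.leadingCoeff
  set θ := -arg c
  have hθ : cexp (θ * I) * c = ‖c‖ := by
    conv_lhs => rw [← norm_mul_exp_arg_mul_I c]
    rw [mul_left_comm, ← Complex.exp_add]
    simp [θ]
  set S := {t : ℝ | cexp (↑(t * μ.im) * I) = cexp (θ * I)}
  have hS : (atTop ⊓ 𝓟 S).NeBot := frequently_iff_neBot.1 (frequently_exp_ofReal_mul_I_eq hμ θ)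
  have hlim : Tendsto (fun t : ℝ => (cexp (θ * I) * (Q.eval ↑t / ↑t ^ Q.natDegree)).re)
      (atTop ⊓ 𝓟 S) (𝓝 ‖c‖) := by
    have := (continuous_re.tendsto _).comp ((Q.tendsto_eval_div_pow_natDegree_cobounded.comp
      (RCLike.tendsto_ofReal_atTop_cobounded ℂ)).const_mul (cexp (θ * I)))
    rw [hθ, ofReal_re] at this
    exact this.mono_left inf_le_left
  have hev : ∀ᶠ t : ℝ in atTop ⊓ 𝓟 S, (cexp (θ * I) * (Q.eval ↑t / ↑t ^ Q.natDegree)).re ≤ 0 := by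
    filter_upwards [h.filter_mono inf_le_left, (eventually_gt_atTop 0).filter_mono inf_le_left,
      mem_inf_of_right (mem_principal_self S)] with t ht htpos htS
    have hfactor : cexp (t * μ) * Q.eval (t : ℂ) = ↑(Real.exp (t * μ.re) * t ^ Q.natDegree) *
        (cexp (θ * I) * (Q.eval ↑t / ↑t ^ Q.natDegree)) := by
      rw [← htS.out]
      have ht0 : (t : ℂ) ≠ 0 := ofReal_ne_zero.2 htpos.ne'
      conv_lhs => rw [← re_add_im μ]
      push_cast
      rw [mul_add, Complex.exp_add, ← mul_assoc]
      field_simp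
    rw [hfactor, re_ofReal_mul] at ht
    exact nonpos_of_mul_nonpos_right ht (by positivity)
  exact leadingCoeff_eq_zero.1 (norm_le_zero_iff.1 (le_of_tendsto hlim hev))

theorem stmt18_general (d : ℕ) (Aκ : Matrix (Fin d) (Fin d) ℂ) (μ : ℂ)
    (hμ : μ.im ≠ 0)
    (hchar : (Aκᴴ).charpoly = (X - C μ) ^ d)
    (b : Fin d → ℂ) (f : Fin d → ℂ) (τ : ℝ)
    (hle : ∀ t : ℝ, τ ≤ t →
      (∑ i, b i * (NormedSpace.exp ((t : ℂ) • Aκᴴ)).mulVec f i).re ≤ 0) :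
    ∀ t : ℝ, ∑ i, b i * (NormedSpace.exp ((t : ℂ) • Aκᴴ)).mulVec f i = 0 := by
  have hnil : (Aκᴴ - algebraMap ℂ _ μ) ^ d = 0 := by
    simpa [hchar] using Aκᴴ.aeval_self_charpoly
  obtain ⟨Q, hQ⟩ := exists_polynomial_dotProduct_exp_smul_mulVec hnil b f
  have hQ' (t : ℝ) :
      ∑ i, b i * (NormedSpace.exp ((t : ℂ) • Aκᴴ)).mulVec f i = cexp (t * μ) * Q.eval (t : ℂ) := by
    rw [Complex.exp_eq_exp_ℂ]
    exact hQ t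
  have hQ0 : Q = 0 := eq_zero_of_eventually_re_exp_mul_eval_nonpos hμ
    (eventually_atTop.2 ⟨τ, fun t ht => hQ' t ▸ hle t ht⟩)
  intro t
  rw [hQ', hQ0, eval_zero, mul_zero]

/-- if `A_κ*` has the single distinct eigenvalue `μ` with `Im μ ≠ 0` and
`Re(b e^{A_κ* t} f) ≤ 0` for all `t ≥ τ`, then `b e^{A_κ* t} f = 0` for all `t`. -/
theorem stmt18 (d : ℕ) (Aκ : Matrix (Fin d) (Fin d) ℂ) (μ : ℂ)
    (hμ : μ.im ≠ 0)
    (hchar : (Aκᴴ).charpoly = (X - C μ) ^ d)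
    (b : Fin d → ℂ) (f : Fin d → ℂ) (τ : ℝ) (hτ : 0 ≤ τ)
    (hle : ∀ t : ℝ, τ ≤ t →
      (∑ i, b i * (NormedSpace.exp ((t : ℂ) • Aκᴴ)).mulVec f i).re ≤ 0) :
    ∀ t : ℝ, ∑ i, b i * (NormedSpace.exp ((t : ℂ) • Aκᴴ)).mulVec f i = 0 :=
  stmt18_general d Aκ μ hμ hchar b f τ hle
end
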